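/- arXiv:1310.4348 — 8 statements merged into one kernel-verified Lean document; each statement's English description precedes it below -/
import Mathlib

section
/- For all positive integers n and d and every finite set B of positive real numbers with |B| ≤ n, the number of unordered pairs in 𝒢_d(B) is at most (n−1)·|R_d|, and in particular |𝒢_d(B)| < n·d². -/
/-- `R_d = {p/q : p, q ∈ [d]}`, the set of ratios of positive integers at most `d`. -/
noncomputable def Rd (d : ℕ) : Finset ℝ :=
  ((Finset.Icc 1 d) ×ˢ (Finset.Icc 1 d)).image (fun pq => (pq.1 : ℝ) / (pq.2 : ℝ))

/-- `𝒢_d(B)`: the set of unordered pairs `{b₁, b₂}` of distinct elements of `B`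
with `b₁ / b₂ ∈ R_d`. -/
noncomputable def Gd (d : ℕ) (B : Finset ℝ) : Finset (Finset ℝ) :=
  (B.powersetCard 2).filter (fun s => ∃ b₁ ∈ s, ∃ b₂ ∈ s, b₁ ≠ b₂ ∧ b₁ / b₂ ∈ Rd d)

lemma Rd_inv {d : ℕ} {x : ℝ} (hx : x ∈ Rd d) : x⁻¹ ∈ Rd d := by
  simp only [Rd, Finset.mem_image, Finset.mem_product] at hx ⊢
  obtain ⟨⟨p, q⟩, hpq, rfl⟩ := hx
  exact ⟨⟨q, p⟩, ⟨hpq.2, hpq.1⟩, by rw [inv_div]⟩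

lemma pair_min' {a b : ℝ} (hab : a < b) :
    ({a, b} : Finset ℝ).min' ⟨a, by simp⟩ = a := by
  apply le_antisymm (Finset.min'_le _ a (by simp))
  apply Finset.le_min'
  intro y hy
  rcases Finset.mem_insert.mp hy with rfl | hy
  · exact le_rfl
  · rw [Finset.mem_singleton] at hy; exact hy ▸ hab.le

lemma pair_max' {a b : ℝ} (hab : a < b) :
    ({a, b} : Finset ℝ).max' ⟨a, by simp⟩ = b := by
  apply le_antisymm
  · apply Finset.max'_le
    intro y hy
    rcases Finset.mem_insert.mp hy with rfl | hy
    · exact hab.le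
    · rw [Finset.mem_singleton] at hy; exact hy.le
  · exact Finset.le_max' _ b (by simp)

theorem stmt_3 (n d : ℕ) (hn : 0 < n) (hd : 0 < d) (B : Finset ℝ)
    (hBpos : ∀ b ∈ B, 0 < b) (hBcard : B.card ≤ n) :
    (Gd d B).card ≤ (n - 1) * (Rd d).card ∧ (Gd d B).card < n * d ^ 2 := by
  have hRd_le : (Rd d).card ≤ d ^ 2 := by
    calc (Rd d).card ≤ ((Finset.Icc 1 d) ×ˢ (Finset.Icc 1 d)).card :=
          Finset.card_image_le
      _ = d * d := by simp [Nat.card_Icc]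
      _ = d ^ 2 := (sq d).symm
  have key : (Gd d B).card ≤ (n - 1) * (Rd d).card := by
    rcases B.eq_empty_or_nonempty with rfl | hB
    · have : Gd d ∅ = ∅ := by
        apply Finset.eq_empty_of_forall_notMem
        intro s hs
        simp only [Gd, Finset.mem_filter, Finset.mem_powersetCard,
          Finset.subset_empty] at hs
        rcases hs with ⟨⟨rfl, hc⟩, -⟩
        simp at hc
      simp [this]
    · set M := B.max' hB with hM
      -- every element of Gd d B is a pair {a, b} with a < b and b / a ∈ Rd d
      have hfact : ∀ s ∈ Gd d B, ∃ a b, a ∈ B ∧ b ∈ B ∧ a < b ∧ s = {a, b}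
          ∧ b / a ∈ Rd d := by
        intro s hs
        simp only [Gd, Finset.mem_filter, Finset.mem_powersetCard] at hs
        obtain ⟨⟨hsub, hcard⟩, b₁, hb₁, b₂, hb₂, hne, hrat⟩ := hs
        have hpair : s = {b₁, b₂} := by
          apply (Finset.eq_of_subset_of_card_le ?_ ?_).symm
          · intro x hx
            rcases Finset.mem_insert.mp hx with rfl | hx
            · exact hb₁
            · rw [Finset.mem_singleton] at hx; exact hx ▸ hb₂
          · rw [hcard, Finset.card_insert_of_notMem (by simpa using hne),
              Finset.card_singleton]
        rcases lt_or_gt_of_ne hne with h | h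
        · refine ⟨b₁, b₂, hsub hb₁, hsub hb₂, h, hpair, ?_⟩
          have : b₂ / b₁ = (b₁ / b₂)⁻¹ := by rw [inv_div]
          rw [this]; exact Rd_inv hrat
        · exact ⟨b₂, b₁, hsub hb₂, hsub hb₁, h, by rw [hpair, Finset.pair_comm], hrat⟩
      classical
      have hinj : (Gd d B).card ≤ ((B.erase M) ×ˢ Rd d).card := by
        apply Finset.card_le_card_of_injOn
          (fun s => if h : s.Nonempty then (s.min' h, s.max' h / s.min' h) else (0, 0))
        · intro s hs
          obtain ⟨a, b, haB, hbB, hab, rfl, hrat⟩ := hfact s hs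
          have hne : ({a, b} : Finset ℝ).Nonempty := ⟨a, by simp⟩
          simp only [dif_pos hne, pair_min' hab, pair_max' hab]
          rw [Finset.mem_coe, Finset.mem_product]
          refine ⟨Finset.mem_erase.mpr ⟨?_, haB⟩, hrat⟩
          have : b ≤ M := Finset.le_max' B b hbB
          exact ne_of_lt (lt_of_lt_of_le hab this)
        · intro s hs t ht hst
          obtain ⟨a, b, haB, hbB, hab, hseq, _⟩ := hfact s hs
          obtain ⟨c, e, hcB, heB, hce, hteq, _⟩ := hfact t ht
          subst hseq; subst hteq
          have hnes : ({a, b} : Finset ℝ).Nonempty := ⟨a, by simp⟩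
          have hnet : ({c, e} : Finset ℝ).Nonempty := ⟨c, by simp⟩
          simp only [dif_pos hnes, dif_pos hnet, pair_min' hab, pair_max' hab,
            pair_min' hce, pair_max' hce, Prod.mk.injEq] at hst
          obtain ⟨h1, h2⟩ := hst
          subst h1
          have ha0 : a ≠ 0 := ne_of_gt (hBpos a haB)
          have : b = e := by
            field_simp at h2
            exact h2
          rw [this]
      have hcardprod : ((B.erase M) ×ˢ Rd d).card = (B.card - 1) * (Rd d).card := by
        rw [Finset.card_product, Finset.card_erase_of_mem (B.max'_mem hB)]
      calc (Gd d B).card ≤ (B.card - 1) * (Rd d).card := by rw [← hcardprod]; exact hinj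
        _ ≤ (n - 1) * (Rd d).card :=
            Nat.mul_le_mul_right _ (Nat.sub_le_sub_right hBcard 1)
  refine ⟨key, lt_of_le_of_lt key ?_⟩
  calc (n - 1) * (Rd d).card ≤ (n - 1) * d ^ 2 := Nat.mul_le_mul_left _ hRd_le
    _ < n * d ^ 2 := by
        have hd2 : 0 < d ^ 2 := by positivity
        exact Nat.mul_lt_mul_of_lt_of_le (Nat.sub_lt hn one_pos) le_rfl hd2
end

section
/- For every positive integer k there exists a constant c₂(k) > 0, depending only on k, such that for every positive integer n, every integer d > c₂(k), and every finite set B of positive real numbers with |B| ≤ n, one has |𝒢_d(B)| < (200k + 1)·n^{1 + 1/k}·d^{1 − 1/(2k)}. -/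
open Finset
open scoped Classical

namespace Stmt4

/-! ### Basics about `Rd` -/

lemma Rd_mem_iff {d : ℕ} {r : ℝ} :
    r ∈ Rd d ↔ ∃ p q : ℕ, p ∈ Finset.Icc 1 d ∧ q ∈ Finset.Icc 1 d ∧ (p : ℝ) / (q : ℝ) = r := by
  constructor
  · intro h
    rw [Rd, Finset.mem_image] at h
    obtain ⟨pq, hpq, h⟩ := h
    rw [Finset.mem_product] at hpq
    exact ⟨pq.1, pq.2, hpq.1, hpq.2, h⟩
  · rintro ⟨p, q, hp, hq, h⟩
    rw [Rd, Finset.mem_image]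
    exact ⟨(p, q), Finset.mem_product.mpr ⟨hp, hq⟩, h⟩

lemma Rd_pos {d : ℕ} {r : ℝ} (h : r ∈ Rd d) : 0 < r := by
  obtain ⟨p, q, hp, hq, h⟩ := Rd_mem_iff.mp h
  rw [Finset.mem_Icc] at hp hq
  have hp1 : (0 : ℝ) < p := by exact_mod_cast Nat.lt_of_lt_of_le Nat.zero_lt_one hp.1
  have hq1 : (0 : ℝ) < q := by exact_mod_cast Nat.lt_of_lt_of_le Nat.zero_lt_one hq.1
  rw [← h]; positivity

lemma Rd_inv {d : ℕ} {r : ℝ} (h : r ∈ Rd d) : r⁻¹ ∈ Rd d := by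
  obtain ⟨p, q, hp, hq, h⟩ := Rd_mem_iff.mp h
  exact Rd_mem_iff.mpr ⟨q, p, hq, hp, by rw [← h, inv_div]⟩

/-- a chosen representation `p/q` of a ratio in `Rd d` -/
noncomputable def rep (d : ℕ) (r : ℝ) : ℕ × ℕ :=
  if h : ∃ p q : ℕ, p ∈ Finset.Icc 1 d ∧ q ∈ Finset.Icc 1 d ∧ (p : ℝ) / (q : ℝ) = r then
    (h.choose, h.choose_spec.choose)
  else (1, 1)

lemma rep_spec {d : ℕ} {r : ℝ} (h : r ∈ Rd d) :
    (rep d r).1 ∈ Finset.Icc 1 d ∧ (rep d r).2 ∈ Finset.Icc 1 d ∧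
      ((rep d r).1 : ℝ) / ((rep d r).2 : ℝ) = r := by
  rw [Rd_mem_iff] at h
  rw [rep, dif_pos h]
  exact ⟨h.choose_spec.choose_spec.1, h.choose_spec.choose_spec.2.1,
    h.choose_spec.choose_spec.2.2⟩

/-! ### adjacency, degrees, ordered edge counts -/

def adj (d : ℕ) (a b : ℝ) : Prop := a ≠ b ∧ a / b ∈ Rd d ∧ b / a ∈ Rd d

lemma adj_comm {d : ℕ} {a b : ℝ} : adj d a b ↔ adj d b a := by
  unfold adj; tauto

lemma adj_irrefl {d : ℕ} {a : ℝ} : ¬ adj d a a := fun h => h.1 rfl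

noncomputable def deg (d : ℕ) (S : Finset ℝ) (v : ℝ) : ℕ :=
  (S.filter (fun u => adj d v u)).card

noncomputable def eP (d : ℕ) (S : Finset ℝ) : ℕ :=
  ((S ×ˢ S).filter (fun p => adj d p.1 p.2)).card

lemma eP_empty (d : ℕ) : eP d (∅ : Finset ℝ) = 0 := by simp [eP]

lemma eP_le_sq (d : ℕ) (B : Finset ℝ) : eP d B ≤ B.card ^ 2 := by
  calc eP d B ≤ (B ×ˢ B).card := Finset.card_filter_le _ _
    _ = B.card ^ 2 := by rw [Finset.card_product, sq]

lemma card_Gd_le_eP (d : ℕ) (B : Finset ℝ) (hpos : ∀ b ∈ B, 0 < b) :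
    (Gd d B).card ≤ eP d B := by
  classical
  apply Finset.card_le_card_of_injOn
    (fun s => (((s.sort (· ≤ ·)).getD 0 0), ((s.sort (· ≤ ·)).getD 1 0)))
  · intro s hs
    rw [Finset.mem_coe, Gd, Finset.mem_filter, Finset.mem_powersetCard] at hs
    obtain ⟨⟨hsB, hcard⟩, b₁, hb₁, b₂, hb₂, hne, hR⟩ := hs
    have hlen : (s.sort (· ≤ ·)).length = 2 := by rw [Finset.length_sort, hcard]
    obtain ⟨x, y, hxy⟩ := List.length_eq_two.mp hlen
    have hxs : x ∈ s := by
      have := Finset.mem_sort (α := ℝ) (· ≤ ·) (s := s) (a := x)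
      rw [← this, hxy]; simp
    have hys : y ∈ s := by
      have := Finset.mem_sort (α := ℝ) (· ≤ ·) (s := s) (a := y)
      rw [← this, hxy]; simp
    have hnd := Finset.sort_nodup s (· ≤ ·)
    rw [hxy] at hnd
    have hxyne : x ≠ y := by
      intro h; rw [h] at hnd; simp at hnd
    -- b₁, b₂ are exactly {x, y}
    have hsxy : s = {x, y} := by
      apply (Finset.eq_of_subset_of_card_le _ _).symm
      · intro z hz
        rcases Finset.mem_insert.mp hz with h | h
        · rwa [h]
        · rw [Finset.mem_singleton.mp h]; exact hys
      · rw [hcard, Finset.card_insert_of_notMem (by simpa using hxyne),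
          Finset.card_singleton]
    have hb1pos : (0:ℝ) < b₁ := hpos b₁ (hsB hb₁)
    have hb2pos : (0:ℝ) < b₂ := hpos b₂ (hsB hb₂)
    have hR' : b₂ / b₁ ∈ Rd d := by
      have := Rd_inv hR; rwa [inv_div] at this
    have hadj : adj d b₁ b₂ ∧ adj d b₂ b₁ :=
      ⟨⟨hne, hR, hR'⟩, ⟨hne.symm, hR', hR⟩⟩
    simp only [hxy]
    have hgx : ([x, y].getD 0 0) = x := rfl
    have hgy : ([x, y].getD 1 0) = y := rfl
    rw [hgx, hgy, Finset.mem_coe, Finset.mem_filter, Finset.mem_product]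
    refine ⟨⟨hsB hxs, hsB hys⟩, ?_⟩
    -- identify (x,y) with (b₁,b₂) or (b₂,b₁)
    have hb1 : b₁ ∈ ({x, y} : Finset ℝ) := by rwa [← hsxy]
    have hb2 : b₂ ∈ ({x, y} : Finset ℝ) := by rwa [← hsxy]
    simp only [Finset.mem_insert, Finset.mem_singleton] at hb1 hb2
    rcases hb1 with h1 | h1 <;> rcases hb2 with h2 | h2
    · exact absurd (h1.trans h2.symm) hne
    · rw [← h1, ← h2]; exact hadj.1
    · rw [← h1, ← h2]; exact hadj.2
    · exact absurd (h1.trans h2.symm) hne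
  · intro s hs t ht hst
    rw [Finset.mem_coe, Gd, Finset.mem_filter] at hs ht
    obtain ⟨hs1, -⟩ := hs
    obtain ⟨ht1, -⟩ := ht
    rw [Finset.mem_powersetCard] at hs1 ht1
    -- reconstruct s from the pair
    have key : ∀ u : Finset ℝ, u ⊆ B → u.card = 2 →
        u = {(u.sort (· ≤ ·)).getD 0 0, (u.sort (· ≤ ·)).getD 1 0} := by
      intro u huB hucard
      have hlen : (u.sort (· ≤ ·)).length = 2 := by rw [Finset.length_sort, hucard]
      obtain ⟨x, y, hxy⟩ := List.length_eq_two.mp hlen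
      have hxs : x ∈ u := by
        have := Finset.mem_sort (α := ℝ) (· ≤ ·) (s := u) (a := x)
        rw [← this, hxy]; simp
      have hys : y ∈ u := by
        have := Finset.mem_sort (α := ℝ) (· ≤ ·) (s := u) (a := y)
        rw [← this, hxy]; simp
      have hnd := Finset.sort_nodup u (· ≤ ·)
      rw [hxy] at hnd
      have hxyne : x ≠ y := by intro h; rw [h] at hnd; simp at hnd
      rw [hxy]
      have hgx : ([x, y].getD 0 0) = x := rfl
      have hgy : ([x, y].getD 1 0) = y := rfl
      rw [hgx, hgy]
      apply (Finset.eq_of_subset_of_card_le _ _).symm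
      · intro z hz
        rcases Finset.mem_insert.mp hz with h | h
        · rwa [h]
        · rw [Finset.mem_singleton.mp h]; exact hys
      · rw [hucard, Finset.card_insert_of_notMem (by simpa using hxyne),
          Finset.card_singleton]
    rw [key s hs1.1 hs1.2, key t ht1.1 ht1.2]
    rw [Prod.mk.injEq] at hst
    rw [hst.1, hst.2]

/-! ### min-degree cleaning -/

lemma eP_erase (d : ℕ) (B : Finset ℝ) (v₀ : ℝ) :
    eP d B ≤ eP d (B.erase v₀) + (deg d B v₀ + deg d B v₀) := by
  classical
  set im1 := (B.filter (fun u => adj d v₀ u)).image (fun u => ((v₀ : ℝ), u)) with him1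
  set im2 := (B.filter (fun u => adj d v₀ u)).image (fun u => (u, (v₀ : ℝ))) with him2
  have hsub : ((B ×ˢ B).filter (fun p => adj d p.1 p.2)) ⊆
      (((B.erase v₀) ×ˢ (B.erase v₀)).filter (fun p => adj d p.1 p.2)) ∪ im1 ∪ im2 := by
    intro p hp
    rw [Finset.mem_filter, Finset.mem_product] at hp
    obtain ⟨⟨h1, h2⟩, hadj⟩ := hp
    by_cases e1 : p.1 = v₀
    · apply Finset.mem_union_left; apply Finset.mem_union_right
      rw [him1, Finset.mem_image]
      refine ⟨p.2, Finset.mem_filter.mpr ⟨h2, by rwa [← e1]⟩, ?_⟩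
      rw [← e1]
    by_cases e2 : p.2 = v₀
    · apply Finset.mem_union_right
      rw [him2, Finset.mem_image]
      refine ⟨p.1, Finset.mem_filter.mpr ⟨h1, ?_⟩, ?_⟩
      · rw [← e2]; exact adj_comm.mp hadj
      · rw [← e2]
    · apply Finset.mem_union_left; apply Finset.mem_union_left
      rw [Finset.mem_filter, Finset.mem_product]
      exact ⟨⟨Finset.mem_erase.mpr ⟨e1, h1⟩, Finset.mem_erase.mpr ⟨e2, h2⟩⟩, hadj⟩
  have h1 : im1.card ≤ deg d B v₀ := by
    rw [him1]; exact le_of_le_of_eq (Finset.card_image_le) rfl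
  have h2 : im2.card ≤ deg d B v₀ := by
    rw [him2]; exact le_of_le_of_eq (Finset.card_image_le) rfl
  calc eP d B ≤ ((((B.erase v₀) ×ˢ (B.erase v₀)).filter (fun p => adj d p.1 p.2)) ∪ im1 ∪ im2).card :=
        Finset.card_le_card hsub
    _ ≤ ((((B.erase v₀) ×ˢ (B.erase v₀)).filter (fun p => adj d p.1 p.2)) ∪ im1).card + im2.card :=
        Finset.card_union_le _ _
    _ ≤ (((B.erase v₀) ×ˢ (B.erase v₀)).filter (fun p => adj d p.1 p.2)).card + im1.card + im2.card := by
        have := Finset.card_union_le ((((B.erase v₀) ×ˢ (B.erase v₀)).filter (fun p => adj d p.1 p.2))) im1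
        omega
    _ ≤ eP d (B.erase v₀) + (deg d B v₀ + deg d B v₀) := by
        rw [eP]; omega

lemma clean (d : ℕ) (c : ℝ) : ∀ (N : ℕ) (B : Finset ℝ), B.card ≤ N → B.Nonempty →
    c * B.card ≤ (eP d B : ℝ) →
    ∃ S, S ⊆ B ∧ S.Nonempty ∧ ∀ v ∈ S, c / 2 ≤ (deg d S v : ℝ) := by
  intro N
  induction N with
  | zero =>
    intro B hB hne
    rw [Finset.nonempty_iff_ne_empty] at hne
    exact absurd (Finset.card_eq_zero.mp (Nat.le_zero.mp hB)) hne
  | succ N ih =>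
    intro B hB hne hE
    by_cases hall : ∀ v ∈ B, c / 2 ≤ (deg d B v : ℝ)
    · exact ⟨B, Finset.Subset.refl B, hne, hall⟩
    · push_neg at hall
      obtain ⟨v₀, hv₀, hlt⟩ := hall
      have hcard : B.card = (B.erase v₀).card + 1 := by
        rw [Finset.card_erase_of_mem hv₀]
        have : 1 ≤ B.card := Finset.card_pos.mpr ⟨v₀, hv₀⟩
        omega
      have herase := eP_erase d B v₀
      have herase' : (eP d B : ℝ) ≤ (eP d (B.erase v₀) : ℝ) + 2 * (deg d B v₀ : ℝ) := by
        push_cast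
        exact_mod_cast by exact_mod_cast Nat.cast_le.mpr herase |>.trans (by push_cast; linarith)
      have he' : c * ((B.erase v₀).card : ℝ) ≤ (eP d (B.erase v₀) : ℝ) := by
        have hBc : (B.card : ℝ) = ((B.erase v₀).card : ℝ) + 1 := by exact_mod_cast hcard
        nlinarith [hE, herase', hlt]
      have hne' : (B.erase v₀).Nonempty := by
        rw [Finset.nonempty_iff_ne_empty]
        intro hemp
        rw [hemp] at he' hcard
        simp [eP_empty] at he'
        rw [hemp] at herase'
        simp [eP_empty] at herase'
        have : (B.card : ℝ) = 1 := by rw [hcard]; norm_num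
        nlinarith [hE, hlt, herase']
      obtain ⟨S, hS1, hS2, hS3⟩ := ih (B.erase v₀) (by omega) hne' he'
      exact ⟨S, hS1.trans (Finset.erase_subset _ _), hS2, hS3⟩

/-! ### walks -/

noncomputable def walks (d : ℕ) (S : Finset ℝ) : ℕ → Finset (List ℝ)
  | 0 => S.image (fun v => [v])
  | (j+1) => (((S ×ˢ (walks d S j)).filter (fun p => adj d p.1 (p.2.getD 0 0))).image
      (fun p => p.1 :: p.2))

lemma mem_walks_zero {d : ℕ} {S : Finset ℝ} {l : List ℝ} :
    l ∈ walks d S 0 ↔ ∃ v, v ∈ S ∧ l = [v] := by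
  rw [walks, Finset.mem_image]
  constructor
  · rintro ⟨v, hv, h⟩; exact ⟨v, hv, h.symm⟩
  · rintro ⟨v, hv, h⟩; exact ⟨v, hv, h.symm⟩

lemma mem_walks_succ {d : ℕ} {S : Finset ℝ} {j : ℕ} {l : List ℝ} :
    l ∈ walks d S (j+1) ↔
      ∃ v t, v ∈ S ∧ t ∈ walks d S j ∧ adj d v (t.getD 0 0) ∧ l = v :: t := by
  rw [walks, Finset.mem_image]
  constructor
  · rintro ⟨p, hp, h⟩
    rw [Finset.mem_filter, Finset.mem_product] at hp
    exact ⟨p.1, p.2, hp.1.1, hp.1.2, hp.2, h.symm⟩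
  · rintro ⟨v, t, hv, ht, hadj, h⟩
    exact ⟨(v, t), Finset.mem_filter.mpr ⟨Finset.mem_product.mpr ⟨hv, ht⟩, hadj⟩, h.symm⟩

lemma walks_getD {d : ℕ} {S : Finset ℝ} :
    ∀ j, ∀ l ∈ walks d S j, ∀ i, i ≤ j → l.getD i 0 ∈ S := by
  intro j
  induction j with
  | zero =>
    intro l hl i hi
    obtain ⟨v, hv, rfl⟩ := mem_walks_zero.mp hl
    interval_cases i
    · simpa using hv
  | succ j ih =>
    intro l hl i hi
    obtain ⟨v, t, hv, ht, hadj, rfl⟩ := mem_walks_succ.mp hl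
    match i with
    | 0 => simpa using hv
    | (i+1) =>
      rw [List.getD_cons_succ]
      exact ih t ht i (by omega)

/-- the `i`-th step ratio of a walk -/
noncomputable def rat (l : List ℝ) (i : ℕ) : ℝ := l.getD (i+1) 0 / l.getD i 0

lemma walks_rat_mem {d : ℕ} {S : Finset ℝ} :
    ∀ j, ∀ l ∈ walks d S j, ∀ i, i < j → rat l i ∈ Rd d := by
  intro j
  induction j with
  | zero => intro l hl i hi; omega
  | succ j ih =>
    intro l hl i hi
    obtain ⟨v, t, hv, ht, hadj, rfl⟩ := mem_walks_succ.mp hl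
    match i with
    | 0 =>
      rw [rat, List.getD_cons_succ, List.getD_cons_zero]
      exact hadj.2.2
    | (i+1) =>
      rw [rat, List.getD_cons_succ, List.getD_cons_succ]
      exact ih t ht i (by omega)

lemma walks_prod_rat {d : ℕ} {S : Finset ℝ} (hpos : ∀ x ∈ S, 0 < x) :
    ∀ j, ∀ l ∈ walks d S j,
      (∏ i ∈ Finset.range j, rat l i) = l.getD j 0 / l.getD 0 0 := by
  intro j
  induction j with
  | zero =>
    intro l hl
    obtain ⟨v, hv, rfl⟩ := mem_walks_zero.mp hl
    simp only [Finset.range_zero, Finset.prod_empty, List.getD_cons_zero]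
    rw [div_self (ne_of_gt (hpos v hv))]
  | succ j ih =>
    intro l hl
    obtain ⟨v, t, hv, ht, hadj, rfl⟩ := mem_walks_succ.mp hl
    have hstep : ∀ i : ℕ, rat (v :: t) (i+1) = rat t i := by
      intro i; rw [rat, rat, List.getD_cons_succ, List.getD_cons_succ]
    rw [Finset.prod_range_succ']
    have h0 : rat (v :: t) 0 = t.getD 0 0 / v := by
      rw [rat, List.getD_cons_succ, List.getD_cons_zero]
    rw [h0]
    have hIH : (∏ i ∈ Finset.range j, rat (v :: t) (i+1)) = t.getD j 0 / t.getD 0 0 := by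
      rw [Finset.prod_congr rfl (fun i _ => hstep i)]
      exact ih t ht
    rw [hIH, List.getD_cons_succ, List.getD_cons_zero]
    have ht0 : t.getD 0 0 ≠ 0 := ne_of_gt (hpos _ (walks_getD j t ht 0 (Nat.zero_le j)))
    rw [mul_comm]; exact div_mul_div_cancel₀' ht0 v (t.getD j 0)

lemma walks_ext {d : ℕ} {S : Finset ℝ} (hpos : ∀ x ∈ S, 0 < x) :
    ∀ j, ∀ l ∈ walks d S j, ∀ m ∈ walks d S j,
      l.getD 0 0 = m.getD 0 0 → (∀ i, i < j → rat l i = rat m i) → l = m := by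
  intro j
  induction j with
  | zero =>
    intro l hl m hm h0 _
    obtain ⟨v, hv, rfl⟩ := mem_walks_zero.mp hl
    obtain ⟨u, hu, rfl⟩ := mem_walks_zero.mp hm
    simp only [List.getD_cons_zero] at h0
    rw [h0]
  | succ j ih =>
    intro l hl m hm h0 hr
    obtain ⟨v, t, hv, ht, hadjt, rfl⟩ := mem_walks_succ.mp hl
    obtain ⟨u, r, hu, hrr, hadjr, rfl⟩ := mem_walks_succ.mp hm
    simp only [List.getD_cons_zero] at h0
    subst h0
    have hv0 : v ≠ 0 := ne_of_gt (hpos v hv)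
    have hr0 := hr 0 (Nat.succ_pos j)
    rw [rat, rat, List.getD_cons_succ, List.getD_cons_zero, List.getD_cons_succ,
      List.getD_cons_zero] at hr0
    have hh : t.getD 0 0 = r.getD 0 0 := (div_left_inj' hv0).mp hr0
    have htail : t = r := by
      apply ih t ht r hrr hh
      intro i hi
      have := hr (i+1) (by omega)
      rwa [rat, rat, List.getD_cons_succ, List.getD_cons_succ, List.getD_cons_succ,
        List.getD_cons_succ, ← rat, ← rat] at this
    rw [htail]

/-! ### counting walks -/

lemma card_filter_product {α β : Type*} (s : Finset α) (w : Finset β) (Q : α → β → Prop) :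
    ((s ×ˢ w).filter (fun p => Q p.1 p.2)).card
      = ∑ t ∈ w, (s.filter (fun v => Q v t)).card := by
  classical
  rw [Finset.card_eq_sum_card_fiberwise (f := Prod.snd) (t := w)
    (fun p hp => (Finset.mem_product.mp (Finset.mem_filter.mp hp).1).2)]
  apply Finset.sum_congr rfl
  intro t ht
  apply Finset.card_nbij' (i := fun p => p.1) (j := fun v => (v, t))
  · intro p hp
    rw [Finset.mem_coe, Finset.mem_filter, Finset.mem_filter, Finset.mem_product] at hp
    obtain ⟨⟨⟨h1, _⟩, hQ⟩, h2⟩ := hp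
    rw [Finset.mem_coe, Finset.mem_filter]
    exact ⟨h1, by rwa [h2] at hQ⟩
  · intro v hv
    rw [Finset.mem_coe, Finset.mem_filter] at hv
    rw [Finset.mem_coe, Finset.mem_filter, Finset.mem_filter, Finset.mem_product]
    exact ⟨⟨⟨hv.1, ht⟩, hv.2⟩, rfl⟩
  · intro p hp
    rw [Finset.mem_coe, Finset.mem_filter] at hp
    rw [← hp.2]
  · intro v _; rfl

lemma walks_card_lb {d : ℕ} {S : Finset ℝ} (t0 : ℝ) (ht0 : 0 ≤ t0)
    (hdeg : ∀ v ∈ S, t0 ≤ (deg d S v : ℝ)) :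
    ∀ j, (S.card : ℝ) * t0 ^ j ≤ ((walks d S j).card : ℝ) := by
  intro j
  induction j with
  | zero =>
    rw [pow_zero, mul_one, walks]
    rw [Finset.card_image_of_injective _ (fun a b h => by simpa using h)]
  | succ j ih =>
    have hinj : Function.Injective (fun p : ℝ × List ℝ => p.1 :: p.2) := by
      intro p q h
      rw [List.cons.injEq] at h
      exact Prod.ext h.1 h.2
    have hcount : ((S ×ˢ walks d S j).filter (fun p => adj d p.1 (p.2.getD 0 0))).card
        = ∑ t ∈ walks d S j, (S.filter (fun v => adj d v (t.getD 0 0))).card :=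
      card_filter_product S (walks d S j) (fun v t => adj d v (t.getD 0 0))
    rw [walks, Finset.card_image_of_injective _ hinj, hcount]
    have hterm : ∀ t ∈ walks d S j,
        t0 ≤ ((S.filter (fun v => adj d v (t.getD 0 0))).card : ℝ) := by
      intro t ht
      have hh : t.getD 0 0 ∈ S := walks_getD j t ht 0 (Nat.zero_le j)
      have : (S.filter (fun v => adj d v (t.getD 0 0))) =
          (S.filter (fun u => adj d (t.getD 0 0) u)) := by
        apply Finset.filter_congr
        intro x _
        exact adj_comm
      rw [this]
      exact hdeg _ hh
    have hsum : ((walks d S j).card : ℝ) * t0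
        ≤ ((∑ t ∈ walks d S j, (S.filter (fun v => adj d v (t.getD 0 0))).card : ℕ) : ℝ) := by
      push_cast
      rw [mul_comm]
      calc t0 * ((walks d S j).card : ℝ) = ∑ _t ∈ walks d S j, t0 := by
            rw [Finset.sum_const, nsmul_eq_mul]; ring
        _ ≤ _ := Finset.sum_le_sum hterm
    calc (S.card : ℝ) * t0 ^ (j+1) = ((S.card : ℝ) * t0 ^ j) * t0 := by ring
      _ ≤ ((walks d S j).card : ℝ) * t0 := mul_le_mul_of_nonneg_right ih ht0
      _ ≤ _ := hsum

/-! ### endpoints and Cauchy-Schwarz -/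

noncomputable def epts (kk : ℕ) (l : List ℝ) : ℝ × ℝ := (l.getD 0 0, l.getD kk 0)

noncomputable def Qset (d kk : ℕ) (S : Finset ℝ) : Finset (List ℝ × List ℝ) :=
  ((walks d S kk) ×ˢ (walks d S kk)).filter (fun p => epts kk p.1 = epts kk p.2)

lemma epts_mem {d kk : ℕ} {S : Finset ℝ} {l : List ℝ} (hl : l ∈ walks d S kk) :
    epts kk l ∈ S ×ˢ S :=
  Finset.mem_product.mpr ⟨walks_getD kk l hl 0 (Nat.zero_le kk), walks_getD kk l hl kk le_rfl⟩

lemma walks_card_eq_sum_fibers (d kk : ℕ) (S : Finset ℝ) :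
    (walks d S kk).card
      = ∑ uv ∈ S ×ˢ S, ((walks d S kk).filter (fun l => epts kk l = uv)).card :=
  Finset.card_eq_sum_card_fiberwise (fun l hl => epts_mem hl)

lemma Qset_card_eq_sum_fibers (d kk : ℕ) (S : Finset ℝ) :
    (Qset d kk S).card
      = ∑ uv ∈ S ×ˢ S, ((walks d S kk).filter (fun l => epts kk l = uv)).card ^ 2 := by
  classical
  rw [Finset.card_eq_sum_card_fiberwise (f := fun p => epts kk p.1) (t := S ×ˢ S)
    (fun p hp => by
      rw [Finset.mem_coe, Qset, Finset.mem_filter, Finset.mem_product] at hp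
      exact epts_mem hp.1.1)]
  apply Finset.sum_congr rfl
  intro uv _
  have hset : ((Qset d kk S).filter (fun p => epts kk p.1 = uv))
      = ((walks d S kk).filter (fun l => epts kk l = uv)) ×ˢ
        ((walks d S kk).filter (fun l => epts kk l = uv)) := by
    apply Finset.ext
    intro p
    rw [Finset.mem_filter, Qset, Finset.mem_filter, Finset.mem_product,
      Finset.mem_product, Finset.mem_filter, Finset.mem_filter]
    constructor
    · rintro ⟨⟨⟨h1, h2⟩, he⟩, hu⟩
      exact ⟨⟨h1, hu⟩, ⟨h2, by rw [← he]; exact hu⟩⟩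
    · rintro ⟨⟨h1, hu1⟩, ⟨h2, hu2⟩⟩
      exact ⟨⟨⟨h1, h2⟩, by rw [hu1, hu2]⟩, hu1⟩
  rw [hset, Finset.card_product, sq]

lemma walks_sq_le (d kk : ℕ) (S : Finset ℝ) :
    ((walks d S kk).card : ℝ) ^ 2 ≤ ((S.card : ℝ)) ^ 2 * ((Qset d kk S).card : ℝ) := by
  have hCS := Finset.sum_mul_sq_le_sq_mul_sq (S ×ˢ S)
    (fun _ => (1 : ℝ))
    (fun uv => (((walks d S kk).filter (fun l => epts kk l = uv)).card : ℝ))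
  simp only [one_mul, one_pow] at hCS
  have h1 : ((walks d S kk).card : ℝ)
      = ∑ uv ∈ S ×ˢ S, (((walks d S kk).filter (fun l => epts kk l = uv)).card : ℝ) := by
    rw [walks_card_eq_sum_fibers d kk S]; push_cast; rfl
  have h2 : ((Qset d kk S).card : ℝ)
      = ∑ uv ∈ S ×ˢ S, (((walks d S kk).filter (fun l => epts kk l = uv)).card : ℝ) ^ 2 := by
    rw [Qset_card_eq_sum_fibers d kk S]; push_cast; rfl
  have h3 : (∑ _uv ∈ S ×ˢ S, (1:ℝ)) = ((S.card : ℝ))^2 := by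
    rw [Finset.sum_const, nsmul_eq_mul, Finset.card_product]
    push_cast; ring
  rw [h1, h2, ← h3]
  exact hCS

/-! ### injection into multiplicative solutions -/

noncomputable def Tset (d kk : ℕ) : Finset ((Fin kk ⊕ Fin kk) → ℕ × ℕ) :=
  (Fintype.piFinset (fun _ => (Finset.Icc 1 d) ×ˢ (Finset.Icc 1 d))).filter
    (fun g => (∏ i, (g i).1) = ∏ i, (g i).2)

lemma Qset_card_le (d kk : ℕ) (S B : Finset ℝ) (hSB : S ⊆ B) (hpos : ∀ b ∈ B, 0 < b) :
    (Qset d kk S).card ≤ B.card * (Tset d kk).card := by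
  classical
  have hSpos : ∀ x ∈ S, 0 < x := fun x hx => hpos x (hSB hx)
  rw [← Finset.card_product]
  apply Finset.card_le_card_of_injOn
    (fun p => (p.1.getD 0 0,
      Sum.elim (fun i : Fin kk => rep d (rat p.1 i))
        (fun i : Fin kk => (rep d (rat p.2 i)).swap)))
  · intro p hp
    rw [Finset.mem_coe, Qset, Finset.mem_filter, Finset.mem_product] at hp
    obtain ⟨⟨hp1, hp2⟩, hep⟩ := hp
    rw [Finset.mem_coe, Finset.mem_product]
    constructor
    · exact hSB (walks_getD kk p.1 hp1 0 (Nat.zero_le kk))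
    · rw [Tset, Finset.mem_filter]
      constructor
      · rw [Fintype.mem_piFinset]
        intro i
        match i with
        | Sum.inl i =>
          have hr := rep_spec (walks_rat_mem kk p.1 hp1 i i.isLt)
          simp only [Sum.elim_inl]
          exact Finset.mem_product.mpr ⟨hr.1, hr.2.1⟩
        | Sum.inr i =>
          have hr := rep_spec (walks_rat_mem kk p.2 hp2 i i.isLt)
          simp only [Sum.elim_inr]
          exact Finset.mem_product.mpr ⟨hr.2.1, hr.1⟩
      · -- the product identity
        rw [Fintype.prod_sum_type, Fintype.prod_sum_type]
        simp only [Sum.elim_inl, Sum.elim_inr, Prod.fst_swap, Prod.snd_swap]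
        -- real versions
        have hprod1 : (∏ i ∈ Finset.range kk, rat p.1 i) = p.1.getD kk 0 / p.1.getD 0 0 :=
          walks_prod_rat hSpos kk p.1 hp1
        have hprod2 : (∏ i ∈ Finset.range kk, rat p.2 i) = p.2.getD kk 0 / p.2.getD 0 0 :=
          walks_prod_rat hSpos kk p.2 hp2
        have hep1 : p.1.getD 0 0 = p.2.getD 0 0 := congrArg Prod.fst hep
        have hep2 : p.1.getD kk 0 = p.2.getD kk 0 := congrArg Prod.snd hep
        have heq : (∏ i ∈ Finset.range kk, rat p.1 i) = ∏ i ∈ Finset.range kk, rat p.2 i := by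
          rw [hprod1, hprod2, hep1, hep2]
        have hratrep1 : ∀ i : Fin kk,
            rat p.1 (i : ℕ) = ((rep d (rat p.1 i)).1 : ℝ) / ((rep d (rat p.1 i)).2 : ℝ) :=
          fun i => (rep_spec (walks_rat_mem kk p.1 hp1 i i.isLt)).2.2.symm
        have hratrep2 : ∀ i : Fin kk,
            rat p.2 (i : ℕ) = ((rep d (rat p.2 i)).1 : ℝ) / ((rep d (rat p.2 i)).2 : ℝ) :=
          fun i => (rep_spec (walks_rat_mem kk p.2 hp2 i i.isLt)).2.2.symm
        have hq1pos : ∀ i : Fin kk, (0:ℝ) < ((rep d (rat p.1 i)).2 : ℝ) := by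
          intro i
          have := (rep_spec (walks_rat_mem kk p.1 hp1 i i.isLt)).2.1
          rw [Finset.mem_Icc] at this
          exact_mod_cast Nat.lt_of_lt_of_le Nat.zero_lt_one this.1
        have hq2pos : ∀ i : Fin kk, (0:ℝ) < ((rep d (rat p.2 i)).2 : ℝ) := by
          intro i
          have := (rep_spec (walks_rat_mem kk p.2 hp2 i i.isLt)).2.1
          rw [Finset.mem_Icc] at this
          exact_mod_cast Nat.lt_of_lt_of_le Nat.zero_lt_one this.1
        have heqFin :
            (∏ i : Fin kk, (((rep d (rat p.1 i)).1 : ℝ) / ((rep d (rat p.1 i)).2 : ℝ)))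
              = ∏ i : Fin kk, (((rep d (rat p.2 i)).1 : ℝ) / ((rep d (rat p.2 i)).2 : ℝ)) := by
          have e1 : (∏ i : Fin kk, (((rep d (rat p.1 i)).1 : ℝ) / ((rep d (rat p.1 i)).2 : ℝ)))
              = ∏ i : Fin kk, rat p.1 (i : ℕ) :=
            Finset.prod_congr rfl (fun i _ => (hratrep1 i).symm)
          have e2 : (∏ i : Fin kk, (((rep d (rat p.2 i)).1 : ℝ) / ((rep d (rat p.2 i)).2 : ℝ)))
              = ∏ i : Fin kk, rat p.2 (i : ℕ) :=
            Finset.prod_congr rfl (fun i _ => (hratrep2 i).symm)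
          rw [e1, e2, Fin.prod_univ_eq_prod_range (fun i => rat p.1 i) kk,
            Fin.prod_univ_eq_prod_range (fun i => rat p.2 i) kk]
          exact heq
        rw [Finset.prod_div_distrib, Finset.prod_div_distrib] at heqFin
        have hQ1 : (0:ℝ) < ∏ i : Fin kk, ((rep d (rat p.1 i)).2 : ℝ) :=
          Finset.prod_pos (fun i _ => hq1pos i)
        have hQ2 : (0:ℝ) < ∏ i : Fin kk, ((rep d (rat p.2 i)).2 : ℝ) :=
          Finset.prod_pos (fun i _ => hq2pos i)
        rw [div_eq_div_iff (ne_of_gt hQ1) (ne_of_gt hQ2)] at heqFin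
        have : ((∏ i : Fin kk, (rep d (rat p.1 i)).1) * ∏ i : Fin kk, (rep d (rat p.2 i)).2 : ℕ)
            = ((∏ i : Fin kk, (rep d (rat p.2 i)).1) * ∏ i : Fin kk, (rep d (rat p.1 i)).2 : ℕ) := by
          have := heqFin
          push_cast at this
          exact_mod_cast this
        calc (∏ i : Fin kk, (rep d (rat p.1 i)).1) * ∏ i : Fin kk, (rep d (rat p.2 i)).2
            = (∏ i : Fin kk, (rep d (rat p.2 i)).1) * ∏ i : Fin kk, (rep d (rat p.1 i)).2 := this
          _ = (∏ i : Fin kk, (rep d (rat p.1 i)).2) * ∏ i : Fin kk, (rep d (rat p.2 i)).1 := by ring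
  · -- injectivity
    intro p hp q hq hpq
    rw [Finset.mem_coe, Qset, Finset.mem_filter, Finset.mem_product] at hp hq
    obtain ⟨⟨hp1, hp2⟩, hepp⟩ := hp
    obtain ⟨⟨hq1, hq2⟩, hepq⟩ := hq
    rw [Prod.mk.injEq] at hpq
    obtain ⟨hhead, hsum⟩ := hpq
    have hrat1 : ∀ i : Fin kk, rat p.1 (i : ℕ) = rat q.1 (i : ℕ) := by
      intro i
      have h := congrFun hsum (Sum.inl i)
      simp only [Sum.elim_inl] at h
      rw [← (rep_spec (walks_rat_mem kk p.1 hp1 i i.isLt)).2.2,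
        ← (rep_spec (walks_rat_mem kk q.1 hq1 i i.isLt)).2.2, h]
    have hrat2 : ∀ i : Fin kk, rat p.2 (i : ℕ) = rat q.2 (i : ℕ) := by
      intro i
      have h := congrFun hsum (Sum.inr i)
      simp only [Sum.elim_inr] at h
      have h' := Prod.swap_injective h
      rw [← (rep_spec (walks_rat_mem kk p.2 hp2 i i.isLt)).2.2,
        ← (rep_spec (walks_rat_mem kk q.2 hq2 i i.isLt)).2.2, h']
    have hSpos' : ∀ x ∈ S, 0 < x := hSpos
    have hfst : p.1 = q.1 := by
      apply walks_ext hSpos' kk p.1 hp1 q.1 hq1 hhead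
      intro i hi
      exact hrat1 ⟨i, hi⟩
    have hhead2 : p.2.getD 0 0 = q.2.getD 0 0 := by
      have e1 : p.2.getD 0 0 = p.1.getD 0 0 := (congrArg Prod.fst hepp).symm
      have e2 : q.2.getD 0 0 = q.1.getD 0 0 := (congrArg Prod.fst hepq).symm
      rw [e1, e2, hhead]
    have hsnd : p.2 = q.2 := by
      apply walks_ext hSpos' kk p.2 hp2 q.2 hq2 hhead2
      intro i hi
      exact hrat2 ⟨i, hi⟩
    exact Prod.ext hfst hsnd

/-! ### factoring solutions of ∏a = ∏b through matrices -/

lemma dvd_split {κ : Type*} [DecidableEq κ] :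
    ∀ (t : Finset κ) (b : κ → ℕ) (c : ℕ), c ∣ ∏ j ∈ t, b j →
      ∃ u : κ → ℕ, (∀ j ∈ t, u j ∣ b j) ∧ ∏ j ∈ t, u j = c := by
  intro t
  induction t using Finset.cons_induction with
  | empty =>
    intro b c hc
    rw [Finset.prod_empty] at hc
    exact ⟨fun _ => 1, by simp, by
      rw [Finset.prod_empty]; exact (Nat.dvd_one.mp hc).symm⟩
  | cons j₀ t hj ih =>
    intro b c hc
    rw [Finset.prod_cons] at hc
    obtain ⟨d₁, d₂, h₁, h₂, rfl⟩ := exists_dvd_and_dvd_of_dvd_mul hc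
    obtain ⟨u, hu, hup⟩ := ih b d₂ h₂
    refine ⟨Function.update u j₀ d₁, ?_, ?_⟩
    · intro j hjm
      rcases Finset.mem_cons.mp hjm with h | h
      · rw [h, Function.update_self]; exact h₁
      · rw [Function.update_of_ne (by rintro rfl; exact hj h)]; exact hu j h
    · rw [Finset.prod_cons, Function.update_self]
      congr 1
      rw [← hup]
      apply Finset.prod_congr rfl
      intro j hjm
      rw [Function.update_of_ne (by rintro rfl; exact hj hjm)]

lemma factor_matrix {α κ : Type*} [DecidableEq α] [DecidableEq κ] :
    ∀ (s : Finset α) (a : α → ℕ) (t : Finset κ) (b : κ → ℕ),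
      (∀ j ∈ t, b j ≠ 0) → (∏ i ∈ s, a i) = ∏ j ∈ t, b j →
      ∃ x : α → κ → ℕ, (∀ i ∈ s, (∏ j ∈ t, x i j) = a i) ∧
        (∀ j ∈ t, (∏ i ∈ s, x i j) = b j) := by
  intro s
  induction s using Finset.cons_induction with
  | empty =>
    intro a t b hb hprod
    rw [Finset.prod_empty] at hprod
    have hone : ∀ j ∈ t, b j = 1 :=
      (Finset.prod_eq_one_iff_of_one_le'
        (fun j hj => Nat.one_le_iff_ne_zero.mpr (hb j hj))).mp hprod.symm
    exact ⟨fun _ _ => 1, by simp, fun j hj => by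
      rw [Finset.prod_empty]; exact (hone j hj).symm⟩
  | cons i₀ s hi ih =>
    intro a t b hb hprod
    rw [Finset.prod_cons] at hprod
    have hbprod : (∏ j ∈ t, b j) ≠ 0 := Finset.prod_ne_zero_iff.mpr hb
    have ha₀ : a i₀ ≠ 0 := by
      intro h
      rw [h, zero_mul] at hprod
      exact hbprod hprod.symm
    have hd : a i₀ ∣ ∏ j ∈ t, b j := hprod ▸ Dvd.intro _ rfl
    obtain ⟨u, hu, hup⟩ := dvd_split t b (a i₀) hd
    have hbj : ∀ j ∈ t, b j = u j * (b j / u j) :=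
      fun j hj => (Nat.mul_div_cancel' (hu j hj)).symm
    have hb' : ∀ j ∈ t, b j / u j ≠ 0 := by
      intro j hj h0
      apply hb j hj
      rw [hbj j hj, h0, mul_zero]
    have hprod' : (∏ i ∈ s, a i) = ∏ j ∈ t, (b j / u j) := by
      have hstep : a i₀ * ∏ i ∈ s, a i = a i₀ * ∏ j ∈ t, (b j / u j) := by
        rw [hprod, Finset.prod_congr rfl hbj, Finset.prod_mul_distrib, hup]
      exact Nat.eq_of_mul_eq_mul_left (Nat.pos_of_ne_zero ha₀) hstep
    obtain ⟨x, hx1, hx2⟩ := ih a t (fun j => b j / u j) hb' hprod'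
    refine ⟨Function.update x i₀ u, ?_, ?_⟩
    · intro i him
      rcases Finset.mem_cons.mp him with h | h
      · rw [h, Function.update_self]; exact hup
      · rw [Function.update_of_ne (by rintro rfl; exact hi h)]; exact hx1 i h
    · intro j hj
      rw [Finset.prod_cons, Function.update_self]
      have hrest : (∏ i ∈ s, Function.update x i₀ u i j) = ∏ i ∈ s, x i j := by
        apply Finset.prod_congr rfl
        intro i him
        rw [Function.update_of_ne (by rintro rfl; exact hi him)]
      rw [hrest, hx2 j hj, ← hbj j hj]


/-! ### counting tuples with bounded product -/

noncomputable def AmF (ι : Type*) [Fintype ι] [DecidableEq ι] (d : ℕ) : Finset (ι → ℕ) :=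
  (Fintype.piFinset (fun _ : ι => Finset.Icc 1 d)).filter (fun y => (∏ i, y i) ≤ d)

lemma Tset_card_le (d kk : ℕ) :
    (Tset d kk).card ≤ (AmF (Fin kk ⊕ Fin kk) d).card ^ (Fintype.card (Fin kk ⊕ Fin kk)) := by
  classical
  set ι := (Fin kk ⊕ Fin kk)
  have hM : (Fintype.piFinset (fun _ : ι => AmF ι d)).card
      = (AmF ι d).card ^ (Fintype.card ι) := by
    rw [Fintype.card_piFinset, Finset.prod_const, Finset.card_univ]
  rw [← hM]
  apply Finset.card_le_card_of_surjOn (fun x => fun i => ((∏ j, x i j), (∏ j, x j i)))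
  intro g hg
  rw [Finset.mem_coe, Tset, Finset.mem_filter, Fintype.mem_piFinset] at hg
  obtain ⟨hmem, hprod⟩ := hg
  have ha : ∀ i : ι, (g i).1 ∈ Finset.Icc 1 d ∧ (g i).2 ∈ Finset.Icc 1 d :=
    fun i => Finset.mem_product.mp (hmem i)
  have hbne : ∀ j ∈ (Finset.univ : Finset ι), (g j).2 ≠ 0 := by
    intro j _
    have := (ha j).2
    rw [Finset.mem_Icc] at this
    omega
  obtain ⟨x, hx1, hx2⟩ := factor_matrix Finset.univ (fun i => (g i).1) Finset.univ
    (fun j => (g j).2) hbne hprod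
  have hxmem : x ∈ Fintype.piFinset (fun _ : ι => AmF ι d) := by
    rw [Fintype.mem_piFinset]
    intro i
    rw [AmF, Finset.mem_filter, Fintype.mem_piFinset]
    have hrow : (∏ j, x i j) = (g i).1 := hx1 i (Finset.mem_univ i)
    have hgi : 1 ≤ (g i).1 ∧ (g i).1 ≤ d := Finset.mem_Icc.mp (ha i).1
    have hxij : ∀ j : ι, x i j ∣ (g i).1 := by
      intro j
      rw [← hrow]
      exact Finset.dvd_prod_of_mem _ (Finset.mem_univ j)
    constructor
    · intro j
      rw [Finset.mem_Icc]
      have hdvd := hxij j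
      have hne : x i j ≠ 0 := by
        intro h0
        rw [h0] at hdvd
        have := Nat.eq_zero_of_zero_dvd hdvd
        omega
      have hle : x i j ≤ (g i).1 := Nat.le_of_dvd (by omega) hdvd
      omega
    · rw [hrow]; exact hgi.2
  refine ⟨x, hxmem, ?_⟩
  funext i
  have h1 : (∏ j, x i j) = (g i).1 := hx1 i (Finset.mem_univ i)
  have h2 : (∏ j, x j i) = (g i).2 := hx2 i (Finset.mem_univ i)
  exact Prod.ext h1 h2

lemma AmF_card_transfer {ι κ : Type*} [Fintype ι] [DecidableEq ι] [Fintype κ] [DecidableEq κ]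
    (e : ι ≃ κ) (d : ℕ) : (AmF ι d).card = (AmF κ d).card := by
  apply Finset.card_nbij' (i := fun y => y ∘ e.symm) (j := fun z => z ∘ e)
  · intro y hy
    rw [AmF, Finset.mem_coe, Finset.mem_filter, Fintype.mem_piFinset] at hy ⊢
    refine ⟨fun j => hy.1 (e.symm j), ?_⟩
    have : (∏ j : κ, y (e.symm j)) = ∏ i : ι, y i := Equiv.prod_comp e.symm y
    simp only [Function.comp_def]
    rw [this]
    exact hy.2
  · intro z hz
    rw [AmF, Finset.mem_coe, Finset.mem_filter, Fintype.mem_piFinset] at hz ⊢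
    refine ⟨fun i => hz.1 (e i), ?_⟩
    have : (∏ i : ι, z (e i)) = ∏ j : κ, z j := Equiv.prod_comp e z
    simp only [Function.comp_def]
    rw [this]
    exact hz.2
  · intro y _; funext i; simp [Function.comp]
  · intro z _; funext j; simp [Function.comp]

lemma AmF_succ_card (M d : ℕ) :
    (AmF (Fin (M+1)) d).card = ∑ q ∈ Finset.Icc 1 d, (AmF (Fin M) (d / q)).card := by
  classical
  rw [← Finset.card_sigma]
  apply Finset.card_nbij' (i := fun x => ⟨x 0, Fin.tail x⟩)
    (j := fun p => Fin.cons p.1 p.2)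
  · intro x hx
    rw [AmF, Finset.mem_coe, Finset.mem_filter, Fintype.mem_piFinset] at hx
    obtain ⟨hmem, hprod⟩ := hx
    rw [Finset.mem_coe, Finset.mem_sigma]
    have hx0 : 1 ≤ x 0 ∧ x 0 ≤ d := Finset.mem_Icc.mp (hmem 0)
    have hsplit : (∏ i, x i) = x 0 * ∏ i : Fin M, Fin.tail x i := Fin.prod_univ_succ x
    have htail_le : (∏ i : Fin M, Fin.tail x i) ≤ d / x 0 := by
      rw [Nat.le_div_iff_mul_le (by omega)]
      rw [mul_comm]
      rw [← hsplit]
      exact hprod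
    constructor
    · exact Finset.mem_Icc.mpr hx0
    · rw [AmF, Finset.mem_filter, Fintype.mem_piFinset]
      refine ⟨?_, htail_le⟩
      intro i
      rw [Finset.mem_Icc]
      have hmem' : 1 ≤ x i.succ ∧ x i.succ ≤ d := Finset.mem_Icc.mp (hmem i.succ)
      have hone : ∀ j : Fin M, 1 ≤ Fin.tail x j := fun j => (Finset.mem_Icc.mp (hmem j.succ)).1
      have hle := Finset.single_le_prod' (f := Fin.tail x)
        (fun j _ => hone j) (Finset.mem_univ i)
      exact ⟨hmem'.1, le_trans hle htail_le⟩
  · intro p hp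
    rw [Finset.mem_coe, Finset.mem_sigma] at hp
    rw [Finset.mem_coe]
    obtain ⟨hq, hy⟩ := hp
    rw [AmF, Finset.mem_filter, Fintype.mem_piFinset] at hy ⊢
    obtain ⟨hmem, hprod⟩ := hy
    rw [Finset.mem_Icc] at hq
    constructor
    · intro i
      refine Fin.cases ?_ ?_ i
      · simp only [Fin.cons_zero, Finset.mem_Icc]; exact hq
      · intro j
        simp only [Fin.cons_succ, Finset.mem_Icc]
        have := Finset.mem_Icc.mp (hmem j)
        exact ⟨this.1, le_trans this.2 (Nat.div_le_self d p.1)⟩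
    · rw [Fin.prod_univ_succ]
      simp only [Fin.cons_zero, Fin.cons_succ]
      calc p.1 * ∏ i : Fin M, p.2 i ≤ p.1 * (d / p.1) :=
            Nat.mul_le_mul_left p.1 hprod
        _ ≤ d := by rw [mul_comm]; exact Nat.div_mul_le_self d p.1
  · intro x _
    exact Fin.cons_self_tail x
  · intro p _
    refine Sigma.ext ?_ ?_
    · simp only [Fin.cons_zero]
    · simp [Fin.tail_cons]

/-! ### harmonic sums -/

noncomputable def Hh (D : ℕ) : ℝ := ∑ q ∈ Finset.Icc 1 D, (1 / (q : ℝ))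

lemma Hh_nonneg (D : ℕ) : 0 ≤ Hh D := by
  apply Finset.sum_nonneg
  intro q _
  positivity

lemma Hh_mono {d D : ℕ} (h : d ≤ D) : Hh d ≤ Hh D := by
  apply Finset.sum_le_sum_of_subset_of_nonneg
  · exact Finset.Icc_subset_Icc_right h
  · intro q _ _; positivity

lemma Hh_le_log {d : ℕ} (hd : 1 ≤ d) : Hh d ≤ 1 + Real.log d := by
  induction d with
  | zero => omega
  | succ m ih =>
    rcases Nat.eq_or_lt_of_le hd with h | h
    · rw [← h]
      norm_num [Hh]
    · have hm : 1 ≤ m := by omega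
      have hmpos : (0:ℝ) < m := by exact_mod_cast hm
      have hm1pos : (0:ℝ) < (m:ℝ) + 1 := by linarith
      have hstep : Hh (m+1) = Hh m + 1 / ((m:ℝ)+1) := by
        rw [Hh, Hh, Finset.sum_Icc_succ_top (by omega)]
        push_cast
        ring
      have hlog : 1 / ((m:ℝ)+1) ≤ Real.log ((m:ℝ)+1) - Real.log m := by
        have hd1 : Real.log ((m:ℝ)/((m:ℝ)+1)) ≤ (m:ℝ)/((m:ℝ)+1) - 1 :=
          Real.log_le_sub_one_of_pos (by positivity)
        rw [Real.log_div (ne_of_gt hmpos) (ne_of_gt hm1pos)] at hd1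
        have : (m:ℝ)/((m:ℝ)+1) - 1 = - (1 / ((m:ℝ)+1)) := by
          field_simp
          ring
        rw [this] at hd1
        linarith
      have := ih hm
      rw [hstep]
      push_cast
      linarith

lemma AmF_card_le (D : ℕ) : ∀ M : ℕ, ∀ d : ℕ, d ≤ D →
    ((AmF (Fin (M+1)) d).card : ℝ) ≤ (d : ℝ) * (Hh D) ^ M := by
  intro M
  induction M with
  | zero =>
    intro d hd
    rw [pow_zero, mul_one]
    have h1 : (AmF (Fin 1) d).card ≤ (Fintype.piFinset (fun _ : Fin 1 => Finset.Icc 1 d)).card :=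
      Finset.card_filter_le _ _
    have h2 : (Fintype.piFinset (fun _ : Fin 1 => Finset.Icc 1 d)).card = d := by
      rw [Fintype.card_piFinset]
      simp [Nat.card_Icc]
    rw [h2] at h1
    exact_mod_cast h1
  | succ M ih =>
    intro d hd
    rw [AmF_succ_card]
    push_cast
    have hterm : ∀ q ∈ Finset.Icc 1 d,
        ((AmF (Fin (M+1)) (d / q)).card : ℝ) ≤ ((d:ℝ) / (q:ℝ)) * (Hh D) ^ M := by
      intro q hq
      calc ((AmF (Fin (M+1)) (d / q)).card : ℝ) ≤ ((d / q : ℕ) : ℝ) * (Hh D) ^ M :=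
            ih (d / q) (le_trans (Nat.div_le_self d q) hd)
        _ ≤ ((d:ℝ) / (q:ℝ)) * (Hh D) ^ M :=
            mul_le_mul_of_nonneg_right Nat.cast_div_le (pow_nonneg (Hh_nonneg D) M)
    calc (∑ q ∈ Finset.Icc 1 d, ((AmF (Fin (M+1)) (d / q)).card : ℝ))
        ≤ ∑ q ∈ Finset.Icc 1 d, ((d:ℝ) / (q:ℝ)) * (Hh D) ^ M := Finset.sum_le_sum hterm
      _ = (d:ℝ) * Hh d * (Hh D) ^ M := by
          rw [← Finset.sum_mul]
          congr 1
          rw [Hh, Finset.mul_sum]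
          apply Finset.sum_congr rfl
          intro q _
          ring
      _ ≤ (d:ℝ) * (Hh D) ^ (M+1) := by
          have h1 : Hh d ≤ Hh D := Hh_mono hd
          have h2 : (0:ℝ) ≤ Hh D := Hh_nonneg D
          have h3 : (0:ℝ) ≤ (d:ℝ) := Nat.cast_nonneg d
          calc (d:ℝ) * Hh d * (Hh D) ^ M ≤ (d:ℝ) * Hh D * (Hh D) ^ M := by
                apply mul_le_mul_of_nonneg_right _ (pow_nonneg h2 M)
                exact mul_le_mul_of_nonneg_left h1 h3
            _ = (d:ℝ) * (Hh D) ^ (M+1) := by ring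

end Stmt4

open Stmt4

set_option maxHeartbeats 2000000

theorem stmt_4 (k : ℕ) (hk : 0 < k) :
    ∃ c : ℝ, 0 < c ∧
      ∀ (n d : ℕ), 0 < n → c < (d : ℝ) →
        ∀ B : Finset ℝ, (∀ b ∈ B, 0 < b) → B.card ≤ n →
          ((Gd d B).card : ℝ) <
            (200 * k + 1) * (n : ℝ) ^ (1 + 1 / (k : ℝ)) * (d : ℝ) ^ (1 - 1 / (2 * (k : ℝ))) := by
  classical
  set K : ℝ := (k : ℝ) with hKdef
  have hK1 : (1:ℝ) ≤ K := by rw [hKdef]; exact_mod_cast hk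
  have hKpos : (0:ℝ) < K := by linarith
  set K₂ : ℝ := 16 * K ^ 3 with hK₂def
  have hK₂1 : (1:ℝ) ≤ K₂ := by
    rw [hK₂def]
    have h3 : (1:ℝ) ≤ K ^ 3 := one_le_pow₀ hK1
    nlinarith
  have hK₂pos : (0:ℝ) < K₂ := by linarith
  set K₃ : ℝ := K₂ ^ (2 * k) with hK₃def
  have hK₃1 : (1:ℝ) ≤ K₃ := one_le_pow₀ hK₂1
  have hK₃pos : (0:ℝ) < K₃ := by linarith
  refine ⟨K₃ ^ (8 * k ^ 2), by positivity, ?_⟩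
  intro n d hn hd B hposB hcard
  have hc1 : (1:ℝ) ≤ K₃ ^ (8 * k ^ 2) := one_le_pow₀ hK₃1
  have hd1 : (1:ℝ) ≤ (d:ℝ) := le_trans hc1 (le_of_lt hd)
  have hdpos : (0:ℝ) < (d:ℝ) := by linarith
  have hd0 : (0:ℝ) ≤ (d:ℝ) := le_of_lt hdpos
  have hnpos : (0:ℝ) < (n:ℝ) := by exact_mod_cast hn
  have hn1 : (1:ℝ) ≤ (n:ℝ) := by exact_mod_cast hn
  set β : ℝ := 1 / (8 * K ^ 2) with hβdef
  have hβpos : 0 < β := by positivity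
  set γ : ℝ := 1 / K₂ with hγdef
  have hγpos : 0 < γ := by positivity
  set X : ℝ := (n : ℝ) ^ (1 + 1 / K) * (d : ℝ) ^ (1 - 1 / (2 * K)) with hXdef
  have hXpos : 0 < X := by
    rw [hXdef]
    have := Real.rpow_pos_of_pos hnpos (1 + 1/K)
    have := Real.rpow_pos_of_pos hdpos (1 - 1/(2*K))
    positivity
  -- helper for (x^e)^m = x^(e*m)
  have hrp : ∀ (x : ℝ), 0 ≤ x → ∀ (e : ℝ) (m : ℕ), (x ^ e) ^ m = x ^ (e * (m:ℝ)) := by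
    intro x hx e m
    rw [← Real.rpow_natCast (x ^ e) m, ← Real.rpow_mul hx]
  set E := eP d B with hEdef
  clear_value E
  suffices hmain : (E : ℝ) ≤ 200 * K * X by
    have hGE : ((Gd d B).card : ℝ) ≤ (E : ℝ) := by
      rw [hEdef]
      exact_mod_cast card_Gd_le_eP d B hposB
    calc ((Gd d B).card : ℝ) ≤ (E : ℝ) := hGE
      _ ≤ 200 * K * X := hmain
      _ < (200 * K + 1) * X := by nlinarith
      _ = (200 * K + 1) * (n : ℝ) ^ (1 + 1 / K) * (d : ℝ) ^ (1 - 1 / (2 * K)) := by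
          rw [hXdef]; ring
  -- the bound on A = counting functions with bounded products
  have hlog : (1:ℝ) + Real.log d ≤ K₂ * (d:ℝ) ^ γ := by
    have hlr : Real.log ((d:ℝ) ^ γ) = γ * Real.log d := Real.log_rpow hdpos γ
    have h1 : Real.log ((d:ℝ) ^ γ) ≤ (d:ℝ) ^ γ - 1 :=
      Real.log_le_sub_one_of_pos (Real.rpow_pos_of_pos hdpos γ)
    rw [hlr] at h1
    have h2 : K₂ * (γ * Real.log d) ≤ K₂ * ((d:ℝ) ^ γ - 1) :=
      mul_le_mul_of_nonneg_left h1 (le_of_lt hK₂pos)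
    have h3 : K₂ * γ = 1 := by
      rw [hγdef]; field_simp
    have h4 : K₂ * (γ * Real.log d) = Real.log d := by
      rw [← mul_assoc, h3, one_mul]
    have hlg : Real.log d ≤ K₂ * (d:ℝ) ^ γ - K₂ := by
      rw [← h4]; linarith
    linarith
  set M : ℕ := k + k - 1 with hMdef
  have hMk : k + k = M + 1 := by omega
  have hM2k : M ≤ 2 * k := by omega
  have hA : ((AmF (Fin k ⊕ Fin k) d).card : ℝ) ≤ K₃ * (d:ℝ) ^ (1 + β) := by
    have htrans : (AmF (Fin k ⊕ Fin k) d).card = (AmF (Fin (k+k)) d).card :=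
      AmF_card_transfer finSumFinEquiv d
    have hAm : ((AmF (Fin (k+k)) d).card : ℝ) ≤ (d:ℝ) * (Hh d) ^ M := by
      rw [hMk]
      exact AmF_card_le d M d le_rfl
    have hHd : Hh d ≤ K₂ * (d:ℝ) ^ γ := by
      have hd1' : 1 ≤ d := by exact_mod_cast hd1
      exact le_trans (Hh_le_log hd1') hlog
    have hHp : (Hh d) ^ M ≤ (K₂ * (d:ℝ) ^ γ) ^ M :=
      pow_le_pow_left₀ (Hh_nonneg d) hHd M
    have hsplit : (K₂ * (d:ℝ) ^ γ) ^ M = K₂ ^ M * (d:ℝ) ^ (γ * (M:ℝ)) := by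
      rw [mul_pow, hrp (d:ℝ) hd0 γ M]
    have hexp_le : γ * (M:ℝ) ≤ β := by
      have hMle : (M:ℝ) ≤ 2 * K := by
        rw [hKdef]
        exact_mod_cast hM2k
      have hγ2K : γ * (2 * K) = β := by
        rw [hγdef, hK₂def, hβdef]
        field_simp
        ring
      calc γ * (M:ℝ) ≤ γ * (2 * K) := mul_le_mul_of_nonneg_left hMle (le_of_lt hγpos)
        _ = β := hγ2K
    have hd_exp : (d:ℝ) ^ (γ * (M:ℝ)) ≤ (d:ℝ) ^ β :=
      Real.rpow_le_rpow_of_exponent_le hd1 hexp_le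
    have hK₂M : K₂ ^ M ≤ K₃ := by
      rw [hK₃def]
      exact pow_le_pow_right₀ hK₂1 hM2k
    calc ((AmF (Fin k ⊕ Fin k) d).card : ℝ) = ((AmF (Fin (k+k)) d).card : ℝ) := by
          rw [htrans]
      _ ≤ (d:ℝ) * (Hh d) ^ M := hAm
      _ ≤ (d:ℝ) * (K₂ ^ M * (d:ℝ) ^ (γ * (M:ℝ))) := by
          rw [← hsplit]
          exact mul_le_mul_of_nonneg_left hHp hd0
      _ ≤ (d:ℝ) * (K₃ * (d:ℝ) ^ β) := by
          apply mul_le_mul_of_nonneg_left _ hd0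
          apply mul_le_mul hK₂M hd_exp (Real.rpow_nonneg hd0 _) (le_of_lt hK₃pos)
      _ = K₃ * (d:ℝ) ^ (1 + β) := by
          rw [Real.rpow_add hdpos, Real.rpow_one]
          ring
  -- main case analysis
  set θ : ℝ := 1 + 1 / (2 * K) with hθdef
  by_cases hncase : (n:ℝ) ≤ (d:ℝ) ^ θ
  · -- trivial bound E ≤ n²
    have hE2 : (E : ℝ) ≤ (n:ℝ) ^ (2:ℕ) := by
      have h1 : E ≤ B.card ^ 2 := hEdef ▸ eP_le_sq d B
      have h2 : B.card ^ 2 ≤ n ^ 2 := Nat.pow_le_pow_left hcard 2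
      exact_mod_cast le_trans h1 h2
    have hsplit2 : (n:ℝ) ^ (2:ℕ) = (n:ℝ) ^ (1 + 1/K) * (n:ℝ) ^ (1 - 1/K) := by
      rw [← Real.rpow_add hnpos]
      have h : (1 + 1/K) + (1 - 1/K) = ((2:ℕ):ℝ) := by push_cast; ring
      rw [h, Real.rpow_natCast]
    have hexp1 : (0:ℝ) ≤ 1 - 1/K := by
      have : 1/K ≤ 1 := by
        rw [div_le_one hKpos]; exact hK1
      linarith
    have hn2 : (n:ℝ) ^ (1 - 1/K) ≤ (d:ℝ) ^ (θ * (1 - 1/K)) := by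
      calc (n:ℝ) ^ (1 - 1/K) ≤ ((d:ℝ) ^ θ) ^ (1 - 1/K) :=
            Real.rpow_le_rpow (le_of_lt hnpos) hncase hexp1
        _ = (d:ℝ) ^ (θ * (1 - 1/K)) := by rw [← Real.rpow_mul hd0]
    have hexp2 : θ * (1 - 1/K) ≤ 1 - 1/(2*K) := by
      rw [hθdef]
      have hid : (1 + 1/(2*K)) * (1 - 1/K) = 1 - 1/(2*K) - 1/(2*K^2) := by
        field_simp
        ring
      rw [hid]
      have : (0:ℝ) < 1/(2*K^2) := by positivity
      linarith
    have hd2 : (d:ℝ) ^ (θ * (1 - 1/K)) ≤ (d:ℝ) ^ (1 - 1/(2*K)) :=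
      Real.rpow_le_rpow_of_exponent_le hd1 hexp2
    have hEX : (E:ℝ) ≤ X := by
      rw [hXdef]
      calc (E:ℝ) ≤ (n:ℝ) ^ (2:ℕ) := hE2
        _ = (n:ℝ) ^ (1 + 1/K) * (n:ℝ) ^ (1 - 1/K) := hsplit2
        _ ≤ (n:ℝ) ^ (1 + 1/K) * (d:ℝ) ^ (1 - 1/(2*K)) := by
            apply mul_le_mul_of_nonneg_left (le_trans hn2 hd2)
            exact Real.rpow_nonneg (le_of_lt hnpos) _
    have h200 : (1:ℝ) ≤ 200 * K := by linarith
    calc (E:ℝ) ≤ X := hEX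
      _ = 1 * X := (one_mul X).symm
      _ ≤ 200 * K * X := mul_le_mul_of_nonneg_right h200 (le_of_lt hXpos)
  · push_neg at hncase
    -- main walk-counting case
    rcases Finset.eq_empty_or_nonempty B with hBe | hBne
    · have : E = 0 := by rw [hEdef, hBe, eP_empty]
      rw [this]
      push_cast
      positivity
    · have hcn : ((E:ℝ)/(n:ℝ)) * (B.card : ℝ) ≤ (E:ℝ) := by
        have h1 : (B.card : ℝ) ≤ (n:ℝ) := by exact_mod_cast hcard
        have h2 : (0:ℝ) ≤ (E:ℝ)/(n:ℝ) := by positivity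
        calc ((E:ℝ)/(n:ℝ)) * (B.card : ℝ) ≤ ((E:ℝ)/(n:ℝ)) * (n:ℝ) :=
              mul_le_mul_of_nonneg_left h1 h2
          _ = (E:ℝ) := by field_simp
      obtain ⟨S, hSB, hSne, hSdeg⟩ := clean d ((E:ℝ)/(n:ℝ)) B.card B le_rfl hBne
        (by rw [← hEdef]; exact hcn)
      have hdeg' : ∀ v ∈ S, (E:ℝ)/(2*(n:ℝ)) ≤ (deg d S v : ℝ) := by
        intro v hv
        have := hSdeg v hv
        rwa [div_div, mul_comm] at this
      have ht0 : (0:ℝ) ≤ (E:ℝ)/(2*(n:ℝ)) := by positivity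
      have hlb := walks_card_lb ((E:ℝ)/(2*(n:ℝ))) ht0 hdeg' k
      have hCS := walks_sq_le d k S
      have hQle : ((Qset d k S).card : ℝ) ≤ (n:ℝ) * ((Tset d k).card : ℝ) := by
        have h1 := Qset_card_le d k S B hSB hposB
        have h2 : B.card * (Tset d k).card ≤ n * (Tset d k).card :=
          Nat.mul_le_mul_right _ hcard
        exact_mod_cast le_trans h1 h2
      have hS0 : (0:ℝ) < (S.card : ℝ) := by
        exact_mod_cast Finset.card_pos.mpr hSne
      have hcomb : ((E:ℝ)/(2*(n:ℝ))) ^ (2*k) ≤ (n:ℝ) * ((Tset d k).card : ℝ) := by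
        have h1 : ((S.card:ℝ) * ((E:ℝ)/(2*(n:ℝ))) ^ k) ^ 2 ≤ ((walks d S k).card : ℝ) ^ 2 :=
          pow_le_pow_left₀ (mul_nonneg (Nat.cast_nonneg _) (pow_nonneg ht0 k)) hlb 2
        have h3 : ((S.card:ℝ)) ^ 2 * ((Qset d k S).card : ℝ)
            ≤ ((S.card:ℝ)) ^ 2 * ((n:ℝ) * ((Tset d k).card : ℝ)) :=
          mul_le_mul_of_nonneg_left hQle (sq_nonneg _)
        have h4 : ((S.card:ℝ)) ^ 2 * (((E:ℝ)/(2*(n:ℝ))) ^ (2*k))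
            ≤ ((S.card:ℝ)) ^ 2 * ((n:ℝ) * ((Tset d k).card : ℝ)) := by
          have e1 : ((S.card:ℝ)) ^ 2 * (((E:ℝ)/(2*(n:ℝ))) ^ (2*k))
              = ((S.card:ℝ) * ((E:ℝ)/(2*(n:ℝ))) ^ k) ^ 2 := by ring
          rw [e1]
          exact le_trans h1 (le_trans hCS h3)
        exact le_of_mul_le_mul_left h4 (pow_pos hS0 2)
      have hTA : ((Tset d k).card : ℝ) ≤ (K₃ * (d:ℝ) ^ (1 + β)) ^ (2*k) := by
        have h5 := Tset_card_le d k
        have hcardι : Fintype.card (Fin k ⊕ Fin k) = 2*k := by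
          simp [Fintype.card_sum, two_mul]
        rw [hcardι] at h5
        have h6 : ((Tset d k).card : ℝ) ≤ ((AmF (Fin k ⊕ Fin k) d).card : ℝ) ^ (2*k) := by
          exact_mod_cast h5
        calc ((Tset d k).card : ℝ) ≤ ((AmF (Fin k ⊕ Fin k) d).card : ℝ) ^ (2*k) := h6
          _ ≤ (K₃ * (d:ℝ) ^ (1 + β)) ^ (2*k) := pow_le_pow_left₀ (Nat.cast_nonneg _) hA (2*k)
      have hkey : ((E:ℝ)/(2*(n:ℝ))) ^ (2*k) ≤ (n:ℝ) * (K₃ * (d:ℝ) ^ (1 + β)) ^ (2*k) :=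
        le_trans hcomb (mul_le_mul_of_nonneg_left hTA (le_of_lt hnpos))
      -- final rpow computation
      set Y : ℝ := 100 * K * (n:ℝ) ^ (1/K) * (d:ℝ) ^ (1 - 1/(2*K)) with hYdef
      have hYnn : 0 ≤ Y := by
        rw [hYdef]
        have := Real.rpow_nonneg (le_of_lt hnpos) (1/K)
        have := Real.rpow_nonneg hd0 (1 - 1/(2*K))
        positivity
      have hK3d : K₃ ^ (2*k) ≤ (d:ℝ) ^ (1/(4*K)) := by
        have h1 : (K₃ ^ (8*k^2) : ℝ) ≤ (d:ℝ) := le_of_lt hd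
        have h2 : (K₃ ^ (8*k^2) : ℝ) ^ (1/(4*K)) ≤ (d:ℝ) ^ (1/(4*K)) :=
          Real.rpow_le_rpow (by positivity) h1 (by positivity)
        calc (K₃ : ℝ) ^ (2*k) = K₃ ^ (((2*k : ℕ)):ℝ) := by rw [Real.rpow_natCast]
          _ = (K₃ ^ (((8*k^2 : ℕ)):ℝ)) ^ (1/(4*K)) := by
              rw [← Real.rpow_mul (le_of_lt hK₃pos)]
              congr 1
              rw [hKdef]
              push_cast
              have hKne : (k:ℝ) ≠ 0 := by positivity
              field_simp
              ring
          _ = (K₃ ^ (8*k^2) : ℝ) ^ (1/(4*K)) := by rw [Real.rpow_natCast]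
          _ ≤ (d:ℝ) ^ (1/(4*K)) := h2
      have hYexp : Y ^ (2*k)
          = (100*K) ^ (2*k) * (n:ℝ) ^ (2:ℝ) * (d:ℝ) ^ ((1 - 1/(2*K)) * ((2*k:ℕ):ℝ)) := by
        rw [hYdef, mul_pow, mul_pow, hrp (n:ℝ) (le_of_lt hnpos) (1/K) (2*k),
          hrp (d:ℝ) hd0 (1 - 1/(2*K)) (2*k)]
        congr 2
        rw [hKdef]
        push_cast
        have hKne : (k:ℝ) ≠ 0 := by positivity
        field_simp
      have hcast2k : ((2*k : ℕ):ℝ) = 2*K := by rw [hKdef]; push_cast; ring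
      have hstep : (n:ℝ) * (K₃ * (d:ℝ) ^ (1 + β)) ^ (2*k) ≤ Y ^ (2*k) := by
        have hLHS : (n:ℝ) * (K₃ * (d:ℝ) ^ (1 + β)) ^ (2*k)
            = (n:ℝ) * K₃ ^ (2*k) * (d:ℝ) ^ ((1+β) * (2*K)) := by
          rw [mul_pow, hrp (d:ℝ) hd0 (1+β) (2*k), hcast2k]
          ring
        have hexpid : 1/(4*K) + (1+β) * (2*K) = (2*K - 1) + θ := by
          rw [hβdef, hθdef]
          field_simp
          ring
        have hchain : (n:ℝ) * K₃ ^ (2*k) * (d:ℝ) ^ ((1+β) * (2*K))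
            ≤ (n:ℝ) * (d:ℝ) ^ (1/(4*K)) * (d:ℝ) ^ ((1+β) * (2*K)) := by
          apply mul_le_mul_of_nonneg_right _ (Real.rpow_nonneg hd0 _)
          exact mul_le_mul_of_nonneg_left hK3d (le_of_lt hnpos)
        have hmerge : (n:ℝ) * (d:ℝ) ^ (1/(4*K)) * (d:ℝ) ^ ((1+β) * (2*K))
            = (n:ℝ) * (d:ℝ) ^ ((2*K - 1) + θ) := by
          rw [mul_assoc, ← Real.rpow_add hdpos, hexpid]
        have hsplitd : (d:ℝ) ^ ((2*K - 1) + θ) = (d:ℝ) ^ (2*K - 1) * (d:ℝ) ^ θ :=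
          Real.rpow_add hdpos _ _
        have hfin : (n:ℝ) * ((d:ℝ) ^ (2*K - 1) * (d:ℝ) ^ θ)
            ≤ (100*K) ^ (2*k) * (n:ℝ) ^ (2:ℝ) * (d:ℝ) ^ (2*K - 1) := by
          have hdθn : (d:ℝ) ^ θ ≤ (n:ℝ) := le_of_lt hncase
          have h100 : (1:ℝ) ≤ (100*K) ^ (2*k) := one_le_pow₀ (by linarith)
          have hn2 : (n:ℝ) ^ (2:ℝ) = (n:ℝ) * (n:ℝ) := by
            rw [show (2:ℝ) = ((2:ℕ):ℝ) by norm_num, Real.rpow_natCast]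
            ring
          rw [hn2]
          have hd2K1 : (0:ℝ) ≤ (d:ℝ) ^ (2*K - 1) := Real.rpow_nonneg hd0 _
          calc (n:ℝ) * ((d:ℝ) ^ (2*K - 1) * (d:ℝ) ^ θ)
              ≤ (n:ℝ) * ((d:ℝ) ^ (2*K - 1) * (n:ℝ)) := by
                apply mul_le_mul_of_nonneg_left _ (le_of_lt hnpos)
                exact mul_le_mul_of_nonneg_left hdθn hd2K1
            _ = 1 * ((n:ℝ) * (n:ℝ)) * (d:ℝ) ^ (2*K - 1) := by ring
            _ ≤ (100*K) ^ (2*k) * ((n:ℝ) * (n:ℝ)) * (d:ℝ) ^ (2*K - 1) := by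
                apply mul_le_mul_of_nonneg_right _ hd2K1
                apply mul_le_mul_of_nonneg_right h100 (by positivity)
        have hee : (1 - 1/(2*K)) * (2*K) = 2*K - 1 := by field_simp
        rw [hLHS, hYexp, hcast2k, hee]
        calc (n:ℝ) * K₃ ^ (2*k) * (d:ℝ) ^ ((1+β) * (2*K))
            ≤ (n:ℝ) * (d:ℝ) ^ (1/(4*K)) * (d:ℝ) ^ ((1+β) * (2*K)) := hchain
          _ = (n:ℝ) * (d:ℝ) ^ ((2*K - 1) + θ) := hmerge
          _ = (n:ℝ) * ((d:ℝ) ^ (2*K - 1) * (d:ℝ) ^ θ) := by rw [hsplitd]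
          _ ≤ (100*K) ^ (2*k) * (n:ℝ) ^ (2:ℝ) * (d:ℝ) ^ (2*K - 1) := hfin
      have h2k0 : 2*k ≠ 0 := by omega
      have hroot : (E:ℝ)/(2*(n:ℝ)) ≤ Y :=
        (pow_le_pow_iff_left₀ ht0 hYnn h2k0).mp (le_trans hkey hstep)
      have hfinal : (E:ℝ) ≤ 2*(n:ℝ) * Y := by
        have h2n : (0:ℝ) < 2*(n:ℝ) := by linarith
        calc (E:ℝ) = ((E:ℝ)/(2*(n:ℝ))) * (2*(n:ℝ)) :=
              (div_mul_cancel₀ _ (ne_of_gt h2n)).symm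
          _ ≤ Y * (2*(n:ℝ)) := mul_le_mul_of_nonneg_right hroot (le_of_lt h2n)
          _ = 2*(n:ℝ) * Y := by ring
      have h2nY : 2*(n:ℝ) * Y = 200 * K * X := by
        rw [hYdef, hXdef]
        have hnn : (n:ℝ) * (n:ℝ) ^ (1/K) = (n:ℝ) ^ (1 + 1/K) := by
          rw [Real.rpow_add hnpos, Real.rpow_one]
        calc 2*(n:ℝ) * (100 * K * (n:ℝ) ^ (1/K) * (d:ℝ) ^ (1 - 1/(2*K)))
            = 200 * K * ((n:ℝ) * (n:ℝ) ^ (1/K)) * (d:ℝ) ^ (1 - 1/(2*K)) := by ring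
          _ = 200 * K * (n:ℝ) ^ (1 + 1/K) * (d:ℝ) ^ (1 - 1/(2*K)) := by rw [hnn]
          _ = 200 * K * ((n:ℝ) ^ (1 + 1/K) * (d:ℝ) ^ (1 - 1/(2*K))) := by ring
      rw [← h2nY]
      exact hfinal
end

section
/- Let m, n, d be positive integers with m ≤ 4nd, n ≤ 4md, and d ≤ 4mn. Then there exist finite sets A and B of positive real numbers with |A| ≤ m and |B| ≤ n such that the number of pairs (a, b) ∈ A × B with a/b ∈ [d] is at least (1/8)·√(m·n·d). -/
open Classical in
/-- The number of pairs `(a, b) ∈ A × B` such that `a / b` is a positive integer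
at most `d` (i.e. `a / b ∈ [d] = {1, …, d}`). -/
noncomputable def pairCount (d : ℕ) (A B : Finset ℝ) : ℕ :=
  ((A ×ˢ B).filter (fun (p : ℝ × ℝ) => ∃ k ∈ Finset.Icc 1 d, p.1 / p.2 = (k : ℝ))).card


lemma half_le_floor {x : ℝ} (hx : 1 ≤ x) : x ≤ 2 * (⌊x⌋₊ : ℝ) := by
  rcases le_or_gt x 2 with h | h
  · have h1 : (1 : ℕ) ≤ ⌊x⌋₊ := Nat.le_floor (by exact_mod_cast hx)
    have : (1:ℝ) ≤ (⌊x⌋₊:ℝ) := by exact_mod_cast h1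
    linarith
  · have := Nat.sub_one_lt_floor x
    linarith

set_option maxHeartbeats 1600000 in
lemma exists_params (m n d : ℕ) (hm : 0 < m) (hn : 0 < n) (hd : 0 < d)
    (h1 : m ≤ 4 * n * d) (h2 : n ≤ 4 * m * d) (h3 : d ≤ 4 * m * n) :
    ∃ s r G : ℕ, 0 < s ∧ 0 < r ∧ 0 < G ∧ s * G ≤ m ∧ r * G ≤ n ∧ s * r ≤ d ∧
      Real.sqrt (m * n * d) ≤ 8 * ((G * (s * r) : ℕ) : ℝ) := by
  have sqrt_le : ∀ Q : ℕ, m * n * d ≤ 64 * Q ^ 2 → Real.sqrt ((m:ℝ) * n * d) ≤ 8 * (Q : ℝ) := by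
    intro Q h
    have h0 : ((m:ℝ) * n * d) ≤ 64 * (Q:ℝ) ^ 2 := by
      have := (Nat.cast_le (α := ℝ)).mpr h
      push_cast at this; linarith
    have h' : ((m:ℝ) * n * d) ≤ (8 * (Q:ℝ)) ^ 2 := by nlinarith
    calc Real.sqrt ((m:ℝ) * n * d) ≤ Real.sqrt ((8 * (Q:ℝ)) ^ 2) := Real.sqrt_le_sqrt h'
      _ = 8 * Q := Real.sqrt_sq (by positivity)
  rcases lt_or_ge (m * d) n with hc | hc1
  · -- degenerate: n > m*d ; use s=1, r=d, G=m
    have e1 : 1 * m ≤ m := by omega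
    have e2 : d * m ≤ n := by nlinarith
    have e3 : 1 * d ≤ d := by omega
    have e4 : m * n * d ≤ 64 * (m * (1 * d)) ^ 2 := by nlinarith [sq_nonneg (m*d)]
    exact ⟨1, d, m, one_pos, hd, hm, e1, e2, e3, sqrt_le _ e4⟩
  rcases lt_or_ge (n * d) m with hc | hc2
  · have e1 : d * n ≤ m := by nlinarith
    have e2 : 1 * n ≤ n := by omega
    have e3 : d * 1 ≤ d := by omega
    have e4 : m * n * d ≤ 64 * (n * (d * 1)) ^ 2 := by nlinarith [sq_nonneg (n*d)]
    exact ⟨d, 1, n, hd, one_pos, hn, e1, e2, e3, sqrt_le _ e4⟩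
  rcases lt_or_ge (m * n) d with hc | hc3
  · have e1 : m * 1 ≤ m := by omega
    have e2 : n * 1 ≤ n := by omega
    have e3 : m * n ≤ d := by omega
    have e4 : m * n * d ≤ 64 * (1 * (m * n)) ^ 2 := by nlinarith [sq_nonneg (m*n)]
    exact ⟨m, n, 1, hm, hn, one_pos, e1, e2, e3, sqrt_le _ e4⟩
  -- main case
  have hm' : (0:ℝ) < m := by exact_mod_cast hm
  have hn' : (0:ℝ) < n := by exact_mod_cast hn
  have hd' : (0:ℝ) < d := by exact_mod_cast hd
  set σ : ℝ := Real.sqrt ((m * d : ℝ) / n) with hσdef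
  set ρ : ℝ := Real.sqrt ((n * d : ℝ) / m) with hρdef
  set γ : ℝ := Real.sqrt ((m * n : ℝ) / d) with hγdef
  have hσ1 : 1 ≤ σ := by
    rw [hσdef, show (1:ℝ) = Real.sqrt 1 by simp]
    apply Real.sqrt_le_sqrt
    rw [le_div_iff₀ hn']
    have : (n : ℝ) ≤ (m*d : ℕ) := by exact_mod_cast hc1
    push_cast at this ⊢; linarith
  have hρ1 : 1 ≤ ρ := by
    rw [hρdef, show (1:ℝ) = Real.sqrt 1 by simp]
    apply Real.sqrt_le_sqrt
    rw [le_div_iff₀ hm']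
    have : (m : ℝ) ≤ (n*d : ℕ) := by exact_mod_cast hc2
    push_cast at this ⊢; linarith
  have hγ1 : 1 ≤ γ := by
    rw [hγdef, show (1:ℝ) = Real.sqrt 1 by simp]
    apply Real.sqrt_le_sqrt
    rw [le_div_iff₀ hd']
    have : (d : ℝ) ≤ (m*n : ℕ) := by exact_mod_cast hc3
    push_cast at this ⊢; linarith
  refine ⟨⌊σ⌋₊, ⌊ρ⌋₊, ⌊γ⌋₊, ?_, ?_, ?_, ?_, ?_, ?_, ?_⟩
  · exact Nat.floor_pos.mpr hσ1
  · exact Nat.floor_pos.mpr hρ1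
  · exact Nat.floor_pos.mpr hγ1
  · have h : (⌊σ⌋₊ : ℝ) * ⌊γ⌋₊ ≤ σ * γ := by
      have := Nat.floor_le (le_trans zero_le_one hσ1)
      have := Nat.floor_le (le_trans zero_le_one hγ1)
      have h0 : (0:ℝ) ≤ (⌊σ⌋₊ : ℝ) := by positivity
      nlinarith [Nat.floor_le (le_trans zero_le_one hσ1)]
    have heq : σ * γ = m := by
      rw [hσdef, hγdef, ← Real.sqrt_mul (by positivity)]
      rw [show (m * d : ℝ) / n * ((m * n : ℝ) / d) = (m:ℝ)^2 by field_simp]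
      exact Real.sqrt_sq hm'.le
    have : ((⌊σ⌋₊ * ⌊γ⌋₊ : ℕ) : ℝ) ≤ (m : ℝ) := by push_cast; linarith [heq ▸ h]
    exact_mod_cast this
  · have h : (⌊ρ⌋₊ : ℝ) * ⌊γ⌋₊ ≤ ρ * γ := by
      nlinarith [Nat.floor_le (le_trans zero_le_one hρ1), Nat.floor_le (le_trans zero_le_one hγ1),
        (by positivity : (0:ℝ) ≤ (⌊ρ⌋₊:ℝ))]
    have heq : ρ * γ = n := by
      rw [hρdef, hγdef, ← Real.sqrt_mul (by positivity)]
      rw [show (n * d : ℝ) / m * ((m * n : ℝ) / d) = (n:ℝ)^2 by field_simp]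
      exact Real.sqrt_sq hn'.le
    have : ((⌊ρ⌋₊ * ⌊γ⌋₊ : ℕ) : ℝ) ≤ (n : ℝ) := by push_cast; linarith [heq ▸ h]
    exact_mod_cast this
  · have h : (⌊σ⌋₊ : ℝ) * ⌊ρ⌋₊ ≤ σ * ρ := by
      nlinarith [Nat.floor_le (le_trans zero_le_one hσ1), Nat.floor_le (le_trans zero_le_one hρ1),
        (by positivity : (0:ℝ) ≤ (⌊σ⌋₊:ℝ))]
    have heq : σ * ρ = d := by
      rw [hσdef, hρdef, ← Real.sqrt_mul (by positivity)]
      rw [show (m * d : ℝ) / n * ((n * d : ℝ) / m) = (d:ℝ)^2 by field_simp]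
      exact Real.sqrt_sq hd'.le
    have : ((⌊σ⌋₊ * ⌊ρ⌋₊ : ℕ) : ℝ) ≤ (d : ℝ) := by push_cast; linarith [heq ▸ h]
    exact_mod_cast this
  · have heq : σ * ρ * γ = Real.sqrt (m * n * d) := by
      rw [hσdef, hρdef, hγdef, ← Real.sqrt_mul (by positivity), ← Real.sqrt_mul (by positivity)]
      congr 1
      field_simp
    have h1' := half_le_floor hσ1
    have h2' := half_le_floor hρ1
    have h3' := half_le_floor hγ1
    have hσ0 : (0:ℝ) ≤ σ := le_trans zero_le_one hσ1
    have hρ0 : (0:ℝ) ≤ ρ := le_trans zero_le_one hρ1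
    have hγ0 : (0:ℝ) ≤ γ := le_trans zero_le_one hγ1
    have a1 : σ * ρ ≤ (2 * (⌊σ⌋₊:ℝ)) * (2 * (⌊ρ⌋₊:ℝ)) :=
      mul_le_mul h1' h2' hρ0 (by positivity)
    have a2 : (σ * ρ) * γ ≤ ((2 * (⌊σ⌋₊:ℝ)) * (2 * (⌊ρ⌋₊:ℝ))) * (2 * (⌊γ⌋₊:ℝ)) :=
      mul_le_mul a1 h3' hγ0 (by positivity)
    have : σ * ρ * γ ≤ 8 * ((⌊γ⌋₊ : ℝ) * ((⌊σ⌋₊:ℝ) * (⌊ρ⌋₊:ℝ))) := by nlinarith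
    rw [← heq]
    push_cast
    linarith

lemma sep {N K k k' g g' : ℕ} (hKN : K < N) (hk1 : 1 ≤ k) (hkK : k ≤ K)
    (hk1' : 1 ≤ k') (hkK' : k' ≤ K) (h : k * N ^ g = k' * N ^ g') :
    g = g' ∧ k = k' := by
  have hN : 1 ≤ N := by omega
  have key : ∀ a b ga gb : ℕ, 1 ≤ a → a ≤ K → 1 ≤ b → b ≤ K →
      a * N ^ ga = b * N ^ gb → ¬ ga < gb := by
    intro a b ga gb ha1 haK hb1 hbK hab hlt
    have c1 : a * N ^ ga ≤ K * N ^ ga := Nat.mul_le_mul_right _ haK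
    have c2 : K * N ^ ga < N * N ^ ga :=
      Nat.mul_lt_mul_of_lt_of_le hKN (le_refl _) (Nat.pow_pos (by omega))
    have c3 : N * N ^ ga = N ^ (ga + 1) := by ring
    have c4 : N ^ (ga + 1) ≤ N ^ gb := Nat.pow_le_pow_right hN (by omega)
    have c5 : N ^ gb ≤ b * N ^ gb := Nat.le_mul_of_pos_left _ (by omega)
    omega
  have hg : g = g' := by
    rcases lt_trichotomy g g' with hlt | he | hlt
    · exact absurd hlt (key k k' g g' hk1 hkK hk1' hkK' h)
    · exact he
    · exact absurd hlt (key k' k g' g hk1' hkK' hk1 hkK h.symm)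
  subst hg
  refine ⟨rfl, ?_⟩
  exact Nat.eq_of_mul_eq_mul_right (Nat.pow_pos (by omega)) h

lemma sepR {N K k k' g g' : ℕ} (hKN : K < N) (hk1 : 1 ≤ k) (hkK : k ≤ K)
    (hk1' : 1 ≤ k') (hkK' : k' ≤ K)
    (h : (k : ℝ) * (N : ℝ) ^ g = (k' : ℝ) * (N : ℝ) ^ g') :
    g = g' ∧ k = k' := by
  apply sep hKN hk1 hkK hk1' hkK'
  exact_mod_cast h

set_option maxHeartbeats 1600000 in
lemma construction (d s r G : ℕ) (hs : 0 < s) (hr : 0 < r) (hG : 0 < G)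
    (hsr : s * r ≤ d) :
    ∃ A B : Finset ℝ, (∀ a ∈ A, 0 < a) ∧ (∀ b ∈ B, 0 < b) ∧
      A.card ≤ s * G ∧ B.card ≤ r * G ∧ G * (s * r) ≤ pairCount d A B := by
  classical
  set N : ℕ := s + r + 2 with hNdef
  have hNpos : (0:ℝ) < (N:ℝ) := by positivity
  set A : Finset ℝ :=
    ((Finset.Icc 1 s) ×ˢ (Finset.Icc 1 G)).image
      (fun p : ℕ × ℕ => (p.1 : ℝ) * (N : ℝ) ^ p.2) with hA
  set B : Finset ℝ :=
    ((Finset.Icc 1 r) ×ˢ (Finset.Icc 1 G)).image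
      (fun p : ℕ × ℕ => (N : ℝ) ^ p.2 / (p.1 : ℝ)) with hB
  refine ⟨A, B, ?_, ?_, ?_, ?_, ?_⟩
  · intro a ha
    rw [hA, Finset.mem_image] at ha
    obtain ⟨p, hp, rfl⟩ := ha
    rw [Finset.mem_product, Finset.mem_Icc, Finset.mem_Icc] at hp
    have : (1:ℝ) ≤ (p.1:ℝ) := by exact_mod_cast hp.1.1
    positivity
  · intro b hb
    rw [hB, Finset.mem_image] at hb
    obtain ⟨p, hp, rfl⟩ := hb
    rw [Finset.mem_product, Finset.mem_Icc, Finset.mem_Icc] at hp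
    have : (1:ℝ) ≤ (p.1:ℝ) := by exact_mod_cast hp.1.1
    positivity
  · calc A.card ≤ ((Finset.Icc 1 s) ×ˢ (Finset.Icc 1 G)).card := Finset.card_image_le
      _ = s * G := by rw [Finset.card_product]; simp
  · calc B.card ≤ ((Finset.Icc 1 r) ×ˢ (Finset.Icc 1 G)).card := Finset.card_image_le
      _ = r * G := by rw [Finset.card_product]; simp
  · rw [pairCount]
    set T : Finset (ℕ × ℕ × ℕ) :=
      (Finset.Icc 1 G) ×ˢ ((Finset.Icc 1 s) ×ˢ (Finset.Icc 1 r)) with hT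
    have hTcard : T.card = G * (s * r) := by
      rw [hT, Finset.card_product, Finset.card_product]; simp
    rw [← hTcard]
    apply Finset.card_le_card_of_injOn
      (fun q : ℕ × ℕ × ℕ => ((q.2.1 : ℝ) * (N : ℝ) ^ q.1, (N : ℝ) ^ q.1 / (q.2.2 : ℝ)))
    · rintro ⟨g, k, j⟩ hq
      simp only [hT, Finset.mem_coe, Finset.mem_product, Finset.mem_Icc] at hq
      obtain ⟨⟨hg1, hgG⟩, ⟨hk1, hks⟩, ⟨hj1, hjr⟩⟩ := hq
      simp only [Finset.mem_coe, Finset.mem_filter, Finset.mem_product]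
      refine ⟨⟨?_, ?_⟩, ?_⟩
      · rw [hA, Finset.mem_image]
        refine ⟨(k, g), ?_, rfl⟩
        simp only [Finset.mem_product, Finset.mem_Icc]
        exact ⟨⟨hk1, hks⟩, hg1, hgG⟩
      · rw [hB, Finset.mem_image]
        refine ⟨(j, g), ?_, rfl⟩
        simp only [Finset.mem_product, Finset.mem_Icc]
        exact ⟨⟨hj1, hjr⟩, hg1, hgG⟩
      · refine ⟨k * j, ?_, ?_⟩
        · rw [Finset.mem_Icc]
          exact ⟨Nat.one_le_iff_ne_zero.mpr (Nat.mul_ne_zero (by omega) (by omega)),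
            le_trans (Nat.mul_le_mul hks hjr) hsr⟩
        · have hj0 : (j : ℝ) ≠ 0 := by
            have : (1:ℝ) ≤ (j:ℝ) := by exact_mod_cast hj1
            linarith
          have hN0 : ((N:ℝ)) ^ g ≠ 0 := by positivity
          push_cast
          field_simp
    · rintro ⟨g, k, j⟩ hq ⟨g', k', j'⟩ hq' heq
      simp only [hT, Finset.mem_coe, Finset.mem_product, Finset.mem_Icc] at hq hq'
      obtain ⟨⟨hg1, hgG⟩, ⟨hk1, hks⟩, ⟨hj1, hjr⟩⟩ := hq
      obtain ⟨⟨hg1', hgG'⟩, ⟨hk1', hks'⟩, ⟨hj1', hjr'⟩⟩ := hq'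
      have h1 : (k : ℝ) * (N:ℝ) ^ g = (k' : ℝ) * (N:ℝ) ^ g' := congrArg Prod.fst heq
      have h2 : (N:ℝ) ^ g / (j : ℝ) = (N:ℝ) ^ g' / (j' : ℝ) := congrArg Prod.snd heq
      have hKN : s + r < N := by omega
      have r1 := sepR (K := s + r) hKN (by omega) (by omega) (by omega) (by omega) h1
      have hj0 : (j : ℝ) ≠ 0 := by
        have : (1:ℝ) ≤ (j:ℝ) := by exact_mod_cast hj1
        linarith
      have hj0' : (j' : ℝ) ≠ 0 := by
        have : (1:ℝ) ≤ (j':ℝ) := by exact_mod_cast hj1'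
        linarith
      have h2' : (j' : ℝ) * (N:ℝ) ^ g = (j : ℝ) * (N:ℝ) ^ g' := by
        field_simp at h2
        linarith [h2]
      have r2 := sepR (K := s + r) hKN (by omega) (by omega) (by omega) (by omega) h2'
      have e1 : g = g' := r1.1
      have e2 : k = k' := r1.2
      have e3 : j = j' := r2.2.symm
      subst e1; subst e2; subst e3
      rfl

theorem stmt_9 (m n d : ℕ) (hm : 0 < m) (hn : 0 < n) (hd : 0 < d)
    (h1 : m ≤ 4 * n * d) (h2 : n ≤ 4 * m * d) (h3 : d ≤ 4 * m * n) :
    ∃ A B : Finset ℝ, (∀ a ∈ A, 0 < a) ∧ (∀ b ∈ B, 0 < b) ∧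
      A.card ≤ m ∧ B.card ≤ n ∧
      (1 : ℝ) / 8 * Real.sqrt (m * n * d) ≤ (pairCount d A B : ℝ) := by
  obtain ⟨s, r, G, hs, hr, hG, hsG, hrG, hsr, hsqrt⟩ :=
    exists_params m n d hm hn hd h1 h2 h3
  obtain ⟨A, B, hApos, hBpos, hAcard, hBcard, hcount⟩ :=
    construction d s r G hs hr hG hsr
  refine ⟨A, B, hApos, hBpos, le_trans hAcard hsG, le_trans hBcard hrG, ?_⟩
  have hc : ((G * (s * r) : ℕ) : ℝ) ≤ (pairCount d A B : ℝ) := by exact_mod_cast hcount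
  linarith
end

section
/- Let ℓ ≥ 2 and r ≥ 2 be integers, let a₁, a₂ be real numbers and b₁, b₂ positive real numbers, and suppose the arithmetic progressions {a₁ + (j−1)b₁ : j = 1, …, ℓ} and {a₂ + (j−1)b₂ : j = 1, …, ℓ} have at least r common elements. Then b₁/b₂ ∈ R_{⌊(ℓ−1)/(r−1)⌋}. -/
/-- The arithmetic progression of length `ℓ` with first term `a` and
difference `b`: the set `{a + (j-1)b : j = 1, …, ℓ}`. -/
noncomputable def AP (a b : ℝ) (ℓ : ℕ) : Finset ℝ :=
  (Finset.range ℓ).image (fun (j : ℕ) => a + (j : ℝ) * b)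

private lemma chain_lemma (Q : ℕ) (f : ℕ → ℕ) :
    ∀ s : ℕ, (∀ i < s, f i + Q ≤ f (i+1)) → f 0 + s * Q ≤ f s := by
  intro s
  induction s with
  | zero => simp
  | succ n ih =>
    intro h
    have h1 := ih (fun i hi => h i (Nat.lt_succ_of_lt hi))
    have h2 := h n (Nat.lt_succ_self n)
    have : f 0 + (n+1) * Q = (f 0 + n * Q) + Q := by ring
    linarith

theorem stmt_14 (ℓ r : ℕ) (hℓ : 2 ≤ ℓ) (hr : 2 ≤ r)
    (a₁ a₂ b₁ b₂ : ℝ) (hb₁ : 0 < b₁) (hb₂ : 0 < b₂)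
    (hcap : r ≤ (AP a₁ b₁ ℓ ∩ AP a₂ b₂ ℓ).card) :
    b₁ / b₂ ∈ Rd ((ℓ - 1) / (r - 1)) := by
  classical
  set d := (ℓ - 1) / (r - 1) with hd
  set s := r - 1 with hs
  have hs1 : 1 ≤ s := by omega
  have hsr : s < r := by omega
  obtain ⟨T, hTsub, hTcard⟩ := Finset.exists_subset_card_eq hcap
  set x := T.orderEmbOfFin hTcard with hxdef
  have hxmem : ∀ i : Fin r, x i ∈ AP a₁ b₁ ℓ ∩ AP a₂ b₂ ℓ :=
    fun i => hTsub (T.orderEmbOfFin_mem hTcard i)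
  have hx1 : ∀ i : Fin r, ∃ j : ℕ, j < ℓ ∧ x i = a₁ + j * b₁ := by
    intro i
    have := (Finset.mem_inter.1 (hxmem i)).1
    simp only [AP, Finset.mem_image, Finset.mem_range] at this
    obtain ⟨j, hj, hje⟩ := this
    exact ⟨j, hj, hje.symm⟩
  have hx2 : ∀ i : Fin r, ∃ j : ℕ, j < ℓ ∧ x i = a₂ + j * b₂ := by
    intro i
    have := (Finset.mem_inter.1 (hxmem i)).2
    simp only [AP, Finset.mem_image, Finset.mem_range] at this
    obtain ⟨j, hj, hje⟩ := this
    exact ⟨j, hj, hje.symm⟩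
  choose J hJlt hJeq using hx1
  choose K hKlt hKeq using hx2
  -- index function
  have hixlt : ∀ n : ℕ, min n s < r := fun n => lt_of_le_of_lt (Nat.min_le_right n s) hsr
  set ix : ℕ → Fin r := fun n => ⟨min n s, hixlt n⟩ with hixdef
  set F : ℕ → ℕ := fun n => J (ix n) with hF
  set G : ℕ → ℕ := fun n => K (ix n) with hG
  set X : ℕ → ℝ := fun n => x (ix n) with hX
  have hXmono : ∀ n < s, X n < X (n+1) := by
    intro n hn
    apply (T.orderEmbOfFin hTcard).strictMono
    show (min n s) < min (n+1) s
    omega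
  have hXeq1 : ∀ n, X n = a₁ + F n * b₁ := fun n => hJeq (ix n)
  have hXeq2 : ∀ n, X n = a₂ + G n * b₂ := fun n => hKeq (ix n)
  have hFlt : ∀ n, F n < ℓ := fun n => hJlt (ix n)
  have hGlt : ∀ n, G n < ℓ := fun n => hKlt (ix n)
  have hFmono : ∀ n < s, F n < F (n+1) := by
    intro n hn
    have h := hXmono n hn
    rw [hXeq1 n, hXeq1 (n+1)] at h
    have : (F n : ℝ) < F (n+1) := by
      have hmul : (F n : ℝ) * b₁ < (F (n+1) : ℝ) * b₁ := by linarith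
      exact lt_of_mul_lt_mul_right hmul hb₁.le
    exact_mod_cast this
  have hGmono : ∀ n < s, G n < G (n+1) := by
    intro n hn
    have h := hXmono n hn
    rw [hXeq2 n, hXeq2 (n+1)] at h
    have : (G n : ℝ) < G (n+1) := by
      have hmul : (G n : ℝ) * b₂ < (G (n+1) : ℝ) * b₂ := by linarith
      exact lt_of_mul_lt_mul_right hmul hb₂.le
    exact_mod_cast this
  obtain ⟨m, hm, hmin⟩ := Finset.exists_min_image (Finset.range s)
    (fun n => F (n+1) - F n) ⟨0, Finset.mem_range.2 (by omega)⟩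
  rw [Finset.mem_range] at hm
  have hmin' : ∀ i < s, F (m+1) - F m ≤ F (i+1) - F i := by
    intro i hi
    exact hmin i (Finset.mem_range.2 hi)
  set q := F (m+1) - F m with hqdef
  set p := G (m+1) - G m with hpdef
  have hgap' : ∀ n < s, ((F (n+1) - F n : ℕ) : ℝ) * b₁ = ((G (n+1) - G n : ℕ) : ℝ) * b₂ := by
    intro n hn
    have c1 : ((F (n+1) - F n : ℕ) : ℝ) = (F (n+1) : ℝ) - F n := by
      push_cast [Nat.cast_sub (le_of_lt (hFmono n hn))]; ring
    have c2 : ((G (n+1) - G n : ℕ) : ℝ) = (G (n+1) : ℝ) - G n := by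
      push_cast [Nat.cast_sub (le_of_lt (hGmono n hn))]; ring
    rw [c1, c2]
    have e1 := hXeq1 n; have e2 := hXeq1 (n+1)
    have e3 := hXeq2 n; have e4 := hXeq2 (n+1)
    nlinarith [hXmono n hn]
  have hq1 : 1 ≤ q := by have := hFmono m hm; omega
  have hqb : (q : ℝ) * b₁ = (p : ℝ) * b₂ := hgap' m hm
  have hp1 : 1 ≤ p := by
    rcases Nat.eq_zero_or_pos p with h0 | h
    · exfalso
      rw [h0] at hqb
      have hq0 : (0:ℝ) < (q:ℝ) * b₁ := by
        have : (0:ℝ) < (q:ℝ) := by exact_mod_cast hq1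
        positivity
      rw [hqb] at hq0
      simp at hq0
    · exact h
  have hpmin : ∀ i < s, p ≤ G (i+1) - G i := by
    intro i hi
    have h1 : (q : ℝ) ≤ ((F (i+1) - F i : ℕ) : ℝ) := by
      exact_mod_cast hmin' i hi
    have h2 := hgap' i hi
    have h3 : (p : ℝ) * b₂ ≤ ((G (i+1) - G i : ℕ) : ℝ) * b₂ := by nlinarith
    have h4 : (p : ℝ) ≤ ((G (i+1) - G i : ℕ) : ℝ) := le_of_mul_le_mul_right h3 hb₂
    exact_mod_cast h4
  -- chain bounds
  have hFs : F 0 + s * q ≤ F s := by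
    apply chain_lemma
    intro i hi
    have h1 := hmin' i hi
    have h2 := hFmono i hi
    omega
  have hGs : G 0 + s * p ≤ G s := by
    apply chain_lemma
    intro i hi
    have h1 := hpmin i hi
    have h2 := hGmono i hi
    omega
  have hqd : q ≤ d := by
    have h1 := hFlt s
    rw [hd, Nat.le_div_iff_mul_le (by omega : 0 < r - 1)]
    have h2 : q * (r - 1) = s * q := by rw [hs]; ring
    omega
  have hpd : p ≤ d := by
    have h1 := hGlt s
    rw [hd, Nat.le_div_iff_mul_le (by omega : 0 < r - 1)]
    have h2 : p * (r - 1) = s * p := by rw [hs]; ring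
    omega
  have hratio : b₁ / b₂ = (p : ℝ) / (q : ℝ) := by
    rw [div_eq_div_iff hb₂.ne' (by positivity)]
    linarith [hqb]
  rw [Rd, Finset.mem_image]
  refine ⟨(p, q), ?_, ?_⟩
  · rw [Finset.mem_product]
    exact ⟨Finset.mem_Icc.2 ⟨hp1, hpd⟩, Finset.mem_Icc.2 ⟨hq1, hqd⟩⟩
  · exact hratio.symm
end

section
/- For every ε > 0 there exists a constant c(ε) > 0 such that for every integer n ≥ 2 and all positive integers a₁ < a₂ < … < aₙ, there exist indices 1 ≤ i < j ≤ n with aⱼ/gcd(aᵢ, aⱼ) > c(ε)·n^{1−ε}. -/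
set_option maxHeartbeats 800000

theorem stmt_16 :
    ∀ ε : ℝ, 0 < ε → ∃ c : ℝ, 0 < c ∧
      ∀ (n : ℕ), 2 ≤ n → ∀ a : Fin n → ℕ, (∀ i, 0 < a i) → StrictMono a →
        ∃ i j : Fin n, i < j ∧
          c * (n : ℝ) ^ (1 - ε) < (a j : ℝ) / (Nat.gcd (a i) (a j) : ℝ) := by
  intro ε hε
  refine ⟨min ε 1 / 3, by positivity, ?_⟩
  intro n hn a hpos hmono
  by_contra hcon
  push_neg at hcon
  set c : ℝ := min ε 1 / 3 with hc
  set B : ℝ := c * (n : ℝ) ^ (1 - ε) with hBdef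
  have hc1 : c ≤ 1 := by
    have := min_le_right ε 1
    simp only [hc]; linarith
  have hcε : c ≤ ε / 3 := by
    have := min_le_left ε 1
    simp only [hc]; linarith
  have hn0 : (0:ℝ) < n := by positivity
  have hcon' : ∀ i j : Fin n, i < j →
      (a j : ℝ) / (Nat.gcd (a i) (a j) : ℝ) ≤ B := by
    intro i j hij
    exact (hcon i j) hij
  -- basic gcd facts
  have hgpos : ∀ i j : Fin n, (0:ℝ) < (Nat.gcd (a i) (a j) : ℝ) := by
    intro i j
    have : 0 < Nat.gcd (a i) (a j) := Nat.gcd_pos_of_pos_left _ (hpos i)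
    exact_mod_cast this
  have hkey : ∀ i j : Fin n, i < j → (a j : ℝ) ≤ B * (Nat.gcd (a i) (a j) : ℝ) := by
    intro i j hij
    have := hcon' i j hij
    have hg := hgpos i j
    calc (a j : ℝ) = (a j : ℝ) / (Nat.gcd (a i) (a j) : ℝ) * (Nat.gcd (a i) (a j) : ℝ) := by
          field_simp
      _ ≤ B * (Nat.gcd (a i) (a j) : ℝ) := by
          apply mul_le_mul_of_nonneg_right this (le_of_lt hg)
  -- indices
  have h0n : 0 < n := by omega
  have h1n : 1 < n := by omega
  set i0 : Fin n := ⟨0, h0n⟩ with hi0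
  set i1 : Fin n := ⟨1, h1n⟩ with hi1
  have hlastn : n - 1 < n := by omega
  set ilast : Fin n := ⟨n - 1, hlastn⟩ with hilast
  have h01 : i0 < i1 := by simp [hi0, hi1, Fin.lt_def]
  -- B > 1
  have hB1 : 1 < B := by
    have hkey01 := hkey i0 i1 h01
    have hgle : (Nat.gcd (a i0) (a i1) : ℝ) ≤ a i0 := by
      exact_mod_cast Nat.le_of_dvd (hpos i0) (Nat.gcd_dvd_left _ _)
    have hlt : (a i0 : ℝ) < a i1 := by exact_mod_cast hmono h01
    have hg := hgpos i0 i1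
    nlinarith [hpos i0, (Nat.cast_pos (α := ℝ)).mpr (hpos i0)]
  have hB0 : 0 < B := by linarith
  set q : ℝ := B / (B - 1) with hq
  have hB1' : (0:ℝ) < B - 1 := by linarith
  have hq1 : 1 < q := by
    rw [hq, lt_div_iff₀ hB1']; linarith
  have hq0 : 0 < q := by linarith
  -- consecutive step
  have hstep : ∀ i j : Fin n, i < j → q * (a i : ℝ) ≤ (a j : ℝ) := by
    intro i j hij
    have hij' : a i < a j := hmono hij
    have hdvd : Nat.gcd (a i) (a j) ∣ a j - a i :=
      Nat.dvd_sub (Nat.gcd_dvd_right _ _) (Nat.gcd_dvd_left _ _)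
    have hsub : 0 < a j - a i := by omega
    have hgle : (Nat.gcd (a i) (a j) : ℝ) ≤ (a j : ℝ) - (a i : ℝ) := by
      have h1 : Nat.gcd (a i) (a j) ≤ a j - a i := Nat.le_of_dvd hsub hdvd
      have h2 : ((a j - a i : ℕ) : ℝ) = (a j : ℝ) - (a i : ℝ) := by
        push_cast [Nat.cast_sub (le_of_lt hij')]; ring
      rw [← h2]; exact_mod_cast h1
    have hk := hkey i j hij
    have hg := hgpos i j
    -- a j ≤ B * (a j - a i)  ⇒  B * a i ≤ (B-1) * a j ⇒ q * a i ≤ a j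
    have h3 : (a j : ℝ) ≤ B * ((a j : ℝ) - (a i : ℝ)) := by nlinarith
    rw [hq, div_mul_eq_mul_div, div_le_iff₀ hB1']
    nlinarith
  -- telescoping
  have hpow : ∀ k : ℕ, ∀ hk : k < n, (a i0 : ℝ) * q ^ k ≤ (a ⟨k, hk⟩ : ℝ) := by
    intro k
    induction k with
    | zero => intro hk; simp [hi0]
    | succ k ih =>
      intro hk
      have hk' : k < n := by omega
      have hlt : (⟨k, hk'⟩ : Fin n) < ⟨k + 1, hk⟩ := by simp [Fin.lt_def]
      calc (a i0 : ℝ) * q ^ (k + 1) = q * ((a i0 : ℝ) * q ^ k) := by ring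
        _ ≤ q * (a ⟨k, hk'⟩ : ℝ) := by
            apply mul_le_mul_of_nonneg_left (ih hk') (le_of_lt hq0)
        _ ≤ (a ⟨k + 1, hk⟩ : ℝ) := hstep _ _ hlt
  have h0last : i0 < ilast := by simp [hi0, hilast, Fin.lt_def]; omega
  have hlastle : (a ilast : ℝ) ≤ B * (a i0 : ℝ) := by
    have hgle : (Nat.gcd (a i0) (a ilast) : ℝ) ≤ a i0 := by
      exact_mod_cast Nat.le_of_dvd (hpos i0) (Nat.gcd_dvd_left _ _)
    have := hkey i0 ilast h0last
    nlinarith [hgpos i0 ilast]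
  have ha0 : (0:ℝ) < (a i0 : ℝ) := by exact_mod_cast hpos i0
  have hpowB : q ^ (n - 1) ≤ B := by
    have h1 := hpow (n - 1) hlastn
    have h2 : (a i0 : ℝ) * q ^ (n - 1) ≤ B * (a i0 : ℝ) := le_trans h1 hlastle
    nlinarith [pow_pos hq0 (n-1)]
  -- logs
  have hlogq : 1 / B ≤ Real.log q := by
    have h1 : Real.log ((B - 1) / B) ≤ (B - 1) / B - 1 :=
      Real.log_le_sub_one_of_pos (by positivity)
    have h2 : Real.log ((B - 1) / B) = Real.log (B - 1) - Real.log B :=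
      Real.log_div (by linarith) (by linarith)
    have h3 : Real.log q = Real.log B - Real.log (B - 1) :=
      Real.log_div (by linarith) (by linarith)
    have h4 : (B - 1) / B - 1 = -(1 / B) := by field_simp; ring
    linarith [h1, h2.symm, h3]
  have hqBlog : ((n:ℝ) - 1) * Real.log q ≤ Real.log B := by
    have h1 : Real.log (q ^ (n - 1)) ≤ Real.log B :=
      Real.log_le_log (pow_pos hq0 _) hpowB
    rw [Real.log_pow] at h1
    have h2 : ((n - 1 : ℕ) : ℝ) = (n : ℝ) - 1 := by
      push_cast [Nat.cast_sub (by omega : 1 ≤ n)]; ring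
    rw [h2] at h1
    exact h1
  have hlogn0 : 0 ≤ Real.log n := Real.log_nonneg (by exact_mod_cast (by omega : 1 ≤ n))
  have hlogB : Real.log B ≤ Real.log n := by
    rw [hBdef, Real.log_mul (by positivity) (by positivity), Real.log_rpow hn0]
    have hlc : Real.log c ≤ 0 := Real.log_nonpos (by positivity) hc1
    nlinarith
  have hchain : (n:ℝ) - 1 ≤ B * Real.log n := by
    have h1 : ((n:ℝ) - 1) * (1 / B) ≤ ((n:ℝ) - 1) * Real.log q := by
      apply mul_le_mul_of_nonneg_left hlogq
      have : (2:ℝ) ≤ n := by exact_mod_cast hn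
      linarith
    have h2 : ((n:ℝ) - 1) * (1 / B) ≤ Real.log n := by linarith
    calc (n:ℝ) - 1 = ((n:ℝ) - 1) * (1 / B) * B := by field_simp
      _ ≤ Real.log n * B := by
          apply mul_le_mul_of_nonneg_right h2 hB0.le
      _ = B * Real.log n := by ring
  have hlogn : Real.log n ≤ (n:ℝ) ^ ε / ε := by
    have h1 : Real.log ((n:ℝ) ^ ε) ≤ (n:ℝ) ^ ε - 1 :=
      Real.log_le_sub_one_of_pos (by positivity)
    rw [Real.log_rpow hn0] at h1
    rw [le_div_iff₀ hε, mul_comm]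
    linarith
  have hrpow : (n:ℝ) ^ (1 - ε) * (n:ℝ) ^ ε = n := by
    rw [← Real.rpow_add hn0]; simp
  have hfinal : B * Real.log n ≤ (n:ℝ) / 3 := by
    have hx : (0:ℝ) < (n:ℝ) ^ (1 - ε) := by positivity
    have ha : B ≤ ε / 3 * (n:ℝ) ^ (1 - ε) := by
      rw [hBdef]
      exact mul_le_mul_of_nonneg_right hcε hx.le
    have h1 : B * Real.log n ≤ (ε / 3 * (n:ℝ) ^ (1 - ε)) * Real.log n :=
      mul_le_mul_of_nonneg_right ha hlogn0
    have h2 : (ε / 3 * (n:ℝ) ^ (1 - ε)) * Real.log n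
        ≤ (ε / 3 * (n:ℝ) ^ (1 - ε)) * ((n:ℝ) ^ ε / ε) :=
      mul_le_mul_of_nonneg_left hlogn (by positivity)
    have h3 : (ε / 3 * (n:ℝ) ^ (1 - ε)) * ((n:ℝ) ^ ε / ε)
        = (n:ℝ) ^ (1 - ε) * (n:ℝ) ^ ε / 3 := by
      field_simp
    rw [h3, hrpow] at h2
    linarith
  have hn2 : (2:ℝ) ≤ n := by exact_mod_cast hn
  linarith
end

section
/- Let ℓ be a positive integer, let p and p' be real numbers, and let q and q' be positive integers. Then the intersection of the arithmetic progressions {p + (j−1)q : j = 1, …, ℓ} and {p' + (j−1)q' : j = 1, …, ℓ} has cardinality at most 1 + ℓ·gcd(q, q')/max(q, q'). -/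
lemma key (ℓ : ℕ) (hℓ : 0 < ℓ) (p p' : ℝ) (q q' : ℕ) (hq : 0 < q) (hq' : 0 < q') :
    ((AP p (q : ℝ) ℓ ∩ AP p' (q' : ℝ) ℓ).card : ℝ) ≤
      1 + ℓ * (Nat.gcd q q' : ℝ) / (q' : ℝ) := by
  set g := Nat.gcd q q' with hgdef
  have hgpos : 0 < g := Nat.gcd_pos_of_pos_left _ hq
  set m := q' / g with hmdef
  have hmg : m * g = q' := Nat.div_mul_cancel (Nat.gcd_dvd_right q q')
  have hmpos : 0 < m := Nat.div_pos (Nat.le_of_dvd hq' (Nat.gcd_dvd_right q q')) hgpos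
  set S := (Finset.range ℓ).filter (fun j : ℕ => p + (j : ℝ) * q ∈ AP p' (q' : ℝ) ℓ) with hSdef
  have hsub : AP p (q : ℝ) ℓ ∩ AP p' (q' : ℝ) ℓ ⊆ S.image (fun j : ℕ => p + (j : ℝ) * q) := by
    intro x hx
    rw [Finset.mem_inter] at hx
    obtain ⟨hx1, hx2⟩ := hx
    simp only [AP, Finset.mem_image, Finset.mem_range] at hx1
    obtain ⟨j, hj, rfl⟩ := hx1
    exact Finset.mem_image.2 ⟨j, Finset.mem_filter.2 ⟨Finset.mem_range.2 hj, hx2⟩, rfl⟩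
  have hcard1 : (AP p (q : ℝ) ℓ ∩ AP p' (q' : ℝ) ℓ).card ≤ S.card :=
    le_trans (Finset.card_le_card hsub) Finset.card_image_le
  -- any two elements of S are congruent mod m
  have hcong : ∀ j1 ∈ S, ∀ j2 ∈ S, j1 ≤ j2 → m ∣ j2 - j1 := by
    intro j1 h1 j2 h2 hle
    rw [hSdef, Finset.mem_filter] at h1 h2
    obtain ⟨-, h1⟩ := h1; obtain ⟨-, h2⟩ := h2
    simp only [AP, Finset.mem_image, Finset.mem_range] at h1 h2
    obtain ⟨k1, -, e1⟩ := h1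
    obtain ⟨k2, -, e2⟩ := h2
    have hr : ((j2 - j1 : ℕ) : ℝ) * q = ((k2 : ℝ) - k1) * q' := by
      rw [Nat.cast_sub hle]
      nlinarith [e1, e2]
    have hz : ((j2 - j1 : ℕ) : ℤ) * q = ((k2 : ℤ) - k1) * q' := by
      exact_mod_cast hr
    have hnat : (j2 - j1) * q = ((k2 : ℤ) - k1).natAbs * q' := by
      have := congrArg Int.natAbs hz
      simpa [Int.natAbs_mul] using this
    set a := j2 - j1
    have hq'dvd : q' ∣ a * q := by rw [hnat]; exact Dvd.intro_left _ rfl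
    have hqg : q / g * g = q := Nat.div_mul_cancel (Nat.gcd_dvd_left q q')
    have hmdvd : m ∣ a * (q / g) := by
      have : m * g ∣ (a * (q / g)) * g := by
        rw [hmg, mul_assoc, hqg]; exact hq'dvd
      exact (mul_dvd_mul_iff_right hgpos.ne').1 this
    have hcop : m.Coprime (q / g) := (Nat.coprime_div_gcd_div_gcd hgpos).symm
    exact hcop.dvd_of_dvd_mul_right hmdvd
  -- injection into range ((ℓ-1)/m + 1)
  have hcard2 : S.card ≤ (ℓ - 1) / m + 1 := by
    have := Finset.card_le_card_of_injOn (s := S) (t := Finset.range ((ℓ - 1) / m + 1)) (fun j => j / m)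
      (fun j hj => by
        have hjℓ : j < ℓ := Finset.mem_range.1 (Finset.mem_filter.1 hj).1
        have : j / m ≤ (ℓ - 1) / m := Nat.div_le_div_right (Nat.le_sub_one_of_lt hjℓ)
        exact Finset.mem_range.2 (Nat.lt_succ_of_le this))
      (fun j1 h1 j2 h2 heq => by
        rcases le_total j1 j2 with hle | hle
        · obtain ⟨t, ht⟩ := hcong j1 h1 j2 h2 hle
          have hj2 : j2 = j1 + m * t := by omega
          simp only at heq
          rw [hj2, Nat.add_mul_div_left _ _ hmpos] at heq
          have ht0 : t = 0 := Nat.left_eq_add.mp heq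
          rw [ht0, mul_zero, add_zero] at hj2
          omega
        · obtain ⟨t, ht⟩ := hcong j2 h2 j1 h1 hle
          have hj1 : j1 = j2 + m * t := by omega
          simp only at heq
          rw [hj1, Nat.add_mul_div_left _ _ hmpos] at heq
          have ht0 : t = 0 := Nat.left_eq_add.mp heq.symm
          rw [ht0, mul_zero, add_zero] at hj1
          omega)
    simpa [Finset.card_range] using this
  -- real arithmetic
  have hmR : (0:ℝ) < m := by exact_mod_cast hmpos
  have hfinal : (((ℓ - 1) / m + 1 : ℕ) : ℝ) ≤ 1 + ℓ * (g : ℝ) / (q' : ℝ) := by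
    push_cast
    have h1 : (((ℓ - 1) / m : ℕ) : ℝ) ≤ ((ℓ - 1 : ℕ) : ℝ) / (m : ℝ) := Nat.cast_div_le
    have h2 : ((ℓ - 1 : ℕ) : ℝ) / (m : ℝ) ≤ (ℓ : ℝ) / (m : ℝ) := by
      gcongr
      exact_mod_cast Nat.sub_le ℓ 1
    have h3 : (ℓ : ℝ) / (m : ℝ) = ℓ * (g : ℝ) / (q' : ℝ) := by
      rw [← hmg]
      push_cast
      field_simp
    linarith
  calc ((AP p (q : ℝ) ℓ ∩ AP p' (q' : ℝ) ℓ).card : ℝ)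
      ≤ (((ℓ - 1) / m + 1 : ℕ) : ℝ) := by exact_mod_cast le_trans hcard1 hcard2
    _ ≤ 1 + ℓ * (g : ℝ) / (q' : ℝ) := hfinal

theorem stmt_17 (ℓ : ℕ) (hℓ : 0 < ℓ) (p p' : ℝ) (q q' : ℕ)
    (hq : 0 < q) (hq' : 0 < q') :
    ((AP p (q : ℝ) ℓ ∩ AP p' (q' : ℝ) ℓ).card : ℝ) ≤
      1 + ℓ * (Nat.gcd q q' : ℝ) / (max q q' : ℝ) := by

  rcases le_total q q' with h | h
  · rw [max_eq_right (by exact_mod_cast h : (q:ℝ) ≤ (q':ℝ))]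
    exact key ℓ hℓ p p' q q' hq hq'
  · rw [max_eq_left (by exact_mod_cast h : (q':ℝ) ≤ (q:ℝ)), Finset.inter_comm, Nat.gcd_comm]
    exact key ℓ hℓ p' p q' q hq' hq
end

section
/- Let n and ℓ be positive integers and let A₁, …, Aₙ be arithmetic progressions of real numbers, each of length ℓ, with pairwise distinct positive integer differences a₁ < a₂ < … < aₙ. Let S denote the sum over all pairs 1 ≤ i < j ≤ n of gcd(aᵢ, aⱼ)/aⱼ. Then |⋃ᵢ Aᵢ| ≥ (n·ℓ)² / (n·ℓ + n² + 2ℓ·S). -/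
lemma AP_card (x b : ℝ) (hb : b ≠ 0) (ℓ : ℕ) : (AP x b ℓ).card = ℓ := by
  rw [AP, Finset.card_image_of_injective _ ?_, Finset.card_range]
  intro j k h
  have : (j : ℝ) = k := by
    have := add_left_cancel h
    exact mul_right_cancel₀ hb this
  exact_mod_cast this

lemma inter_card_le (x y : ℝ) (b c : ℕ) (hb : 0 < b) (hc : 0 < c) (ℓ : ℕ) :
    ((AP x (b:ℝ) ℓ ∩ AP y (c:ℝ) ℓ).card : ℝ) ≤ ℓ * (Nat.gcd b c : ℝ) / c + 1 := by
  set g := Nat.gcd b c with hgdef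
  have hg : 0 < g := Nat.gcd_pos_of_pos_left _ hb
  set q := c / g with hqdef
  have hgc : g ∣ c := Nat.gcd_dvd_right b c
  have hqg : q * g = c := Nat.div_mul_cancel hgc
  have hq : 0 < q := Nat.div_pos (Nat.le_of_dvd hc hgc) hg
  set T : Finset ℕ := (Finset.range ℓ).filter (fun s => x + (s:ℝ) * b ∈ AP y (c:ℝ) ℓ) with hT
  -- Step A
  have hsub : AP x (b:ℝ) ℓ ∩ AP y (c:ℝ) ℓ ⊆ T.image (fun s : ℕ => x + (s:ℝ) * b) := by
    intro z hz
    rw [Finset.mem_inter] at hz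
    obtain ⟨hz1, hz2⟩ := hz
    rw [AP, Finset.mem_image] at hz1
    obtain ⟨s, hs, rfl⟩ := hz1
    exact Finset.mem_image.mpr ⟨s, Finset.mem_filter.mpr ⟨hs, hz2⟩, rfl⟩
  have hA : (AP x (b:ℝ) ℓ ∩ AP y (c:ℝ) ℓ).card ≤ T.card :=
    le_trans (Finset.card_le_card hsub) (Finset.card_image_le)
  -- Step B
  have hcong : ∀ s ∈ T, ∀ s' ∈ T, s' ≤ s → q ∣ (s - s') := by
    intro s hs s' hs' hle
    rw [hT, Finset.mem_filter] at hs hs'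
    obtain ⟨-, hs2⟩ := hs
    obtain ⟨-, hs2'⟩ := hs'
    rw [AP, Finset.mem_image] at hs2 hs2'
    obtain ⟨t, -, ht⟩ := hs2
    obtain ⟨t', -, ht'⟩ := hs2'
    have hreal : ((s:ℝ) - s') * b = ((t:ℝ) - t') * c := by linear_combination ht' - ht
    have hint : ((s:ℤ) - s') * b = ((t:ℤ) - t') * c := by exact_mod_cast hreal
    have hdvd : (c:ℤ) ∣ ((s:ℤ) - s') * b := ⟨(t:ℤ) - t', by linarith [hint]⟩
    have hbg : (b / g) * g = b := Nat.div_mul_cancel (Nat.gcd_dvd_left b c)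
    have hdvd2 : (q:ℤ) ∣ ((s:ℤ) - s') * (b/g : ℕ) := by
      have h1 : ((q:ℤ) * g) ∣ (((s:ℤ) - s') * (b/g : ℕ)) * g := by
        have hbgZ : ((b/g : ℕ):ℤ) * g = b := by exact_mod_cast hbg
        have he : (((s:ℤ) - s') * (b/g : ℕ)) * g = ((s:ℤ) - s') * b := by
          rw [← hbgZ]; ring
        rw [he]
        have he2 : ((q:ℤ) * g) = c := by exact_mod_cast hqg
        rw [he2]; exact hdvd
      exact (mul_dvd_mul_iff_right (by exact_mod_cast hg.ne' : (g:ℤ) ≠ 0)).mp h1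
    have hcop : IsCoprime (q:ℤ) ((b/g : ℕ):ℤ) :=
      Nat.isCoprime_iff_coprime.mpr (Nat.coprime_div_gcd_div_gcd hg).symm
    have hqd : (q:ℤ) ∣ (s:ℤ) - s' := hcop.dvd_of_dvd_mul_right hdvd2
    have h2 : ((s - s' : ℕ):ℤ) = (s:ℤ) - s' := by omega
    exact_mod_cast h2 ▸ hqd
  -- Step C
  have hC : T.card ≤ (ℓ - 1)/q + 1 := by
    rcases T.eq_empty_or_nonempty with h | hne
    · rw [h]; simp
    · set s₀ := T.min' hne with hs₀
      have hsub2 : T ⊆ (Finset.range ((ℓ-1)/q + 1)).image (fun k => s₀ + q * k) := by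
        intro s hs
        have hle : s₀ ≤ s := T.min'_le s hs
        have hdvd := hcong s hs s₀ (T.min'_mem hne) hle
        refine Finset.mem_image.mpr ⟨(s - s₀)/q, ?_, ?_⟩
        · rw [Finset.mem_range, Nat.lt_succ_iff]
          apply Nat.div_le_div_right
          have : s < ℓ := Finset.mem_range.mp (Finset.mem_filter.mp (hT ▸ hs)).1
          omega
        · rw [Nat.mul_div_cancel' hdvd]; omega
      exact le_trans (Finset.card_le_card hsub2)
        (le_trans Finset.card_image_le (by rw [Finset.card_range]))
  -- Step D
  have hqR : (0:ℝ) < q := by exact_mod_cast hq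
  have hgR : (0:ℝ) < g := by exact_mod_cast hg
  have hcR : (c:ℝ) = q * g := by exact_mod_cast hqg.symm
  have hcast : (((ℓ - 1)/q + 1 : ℕ) : ℝ) ≤ ℓ * (g : ℝ) / c + 1 := by
    push_cast
    have h1 : (((ℓ-1)/q : ℕ) : ℝ) ≤ ((ℓ-1:ℕ) : ℝ) / q := Nat.cast_div_le
    have h2 : ((ℓ-1:ℕ):ℝ) / q ≤ (ℓ:ℝ) / q := by
      gcongr
      exact_mod_cast Nat.sub_le ℓ 1
    have h3 : (ℓ:ℝ)/q = ℓ * g / c := by rw [hcR]; field_simp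
    linarith
  calc ((AP x (b:ℝ) ℓ ∩ AP y (c:ℝ) ℓ).card : ℝ) ≤ (((ℓ - 1)/q + 1 : ℕ) : ℝ) := by
        exact_mod_cast le_trans hA hC
    _ ≤ ℓ * (g : ℝ) / c + 1 := hcast


lemma split_sum {n : ℕ} (F : Fin n × Fin n → ℝ)
    (hsym : ∀ i j : Fin n, F (i, j) = F (j, i)) :
    ∑ qq : Fin n × Fin n, F qq =
      (∑ i, F (i, i)) +
        2 * ∑ qq ∈ Finset.univ.filter (fun qq : Fin n × Fin n => qq.1 < qq.2), F qq := by
  classical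
  rw [← Finset.sum_filter_add_sum_filter_not Finset.univ
      (fun qq : Fin n × Fin n => qq.1 < qq.2) F]
  have hnot : Finset.univ.filter (fun qq : Fin n × Fin n => ¬ qq.1 < qq.2)
      = Finset.univ.filter (fun qq : Fin n × Fin n => qq.1 = qq.2) ∪
        Finset.univ.filter (fun qq : Fin n × Fin n => qq.2 < qq.1) := by
    rw [← Finset.filter_or]
    apply Finset.filter_congr
    intro qq _
    simp only [not_lt, eq_iff_iff]
    constructor
    · intro h; rcases lt_or_eq_of_le h with h' | h'
      · exact Or.inr h'
      · exact Or.inl h'.symm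
    · intro h; rcases h with h | h
      · exact le_of_eq h.symm
      · exact le_of_lt h
  have hdisj : Disjoint
      (Finset.univ.filter (fun qq : Fin n × Fin n => qq.1 = qq.2))
      (Finset.univ.filter (fun qq : Fin n × Fin n => qq.2 < qq.1)) := by
    rw [Finset.disjoint_left]
    intro qq h1 h2
    rw [Finset.mem_filter] at h1 h2
    exact absurd (h1.2 ▸ h2.2) (lt_irrefl _)
  rw [hnot, Finset.sum_union hdisj]
  have hdiag : ∑ qq ∈ Finset.univ.filter (fun qq : Fin n × Fin n => qq.1 = qq.2), F qq
      = ∑ i, F (i, i) := by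
    have him : Finset.univ.filter (fun qq : Fin n × Fin n => qq.1 = qq.2)
        = Finset.univ.image (fun i : Fin n => (i, i)) := by
      ext qq
      simp only [Finset.mem_filter, Finset.mem_univ, true_and, Finset.mem_image]
      constructor
      · intro h; exact ⟨qq.1, by rw [Prod.ext_iff]; exact ⟨rfl, h⟩⟩
      · rintro ⟨i, rfl⟩; rfl
    rw [him, Finset.sum_image (fun i _ j _ h => (Prod.ext_iff.mp h).1)]
  have hgt : ∑ qq ∈ Finset.univ.filter (fun qq : Fin n × Fin n => qq.2 < qq.1), F qq
      = ∑ qq ∈ Finset.univ.filter (fun qq : Fin n × Fin n => qq.1 < qq.2), F qq := by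
    have him : Finset.univ.filter (fun qq : Fin n × Fin n => qq.2 < qq.1)
        = (Finset.univ.filter (fun qq : Fin n × Fin n => qq.1 < qq.2)).image Prod.swap := by
      ext qq
      simp only [Finset.mem_filter, Finset.mem_univ, true_and, Finset.mem_image]
      constructor
      · intro h; exact ⟨qq.swap, h, Prod.swap_swap qq⟩
      · rintro ⟨r, hr, rfl⟩; exact hr
    rw [him, Finset.sum_image (fun i _ j _ h => Prod.swap_injective h)]
    refine Finset.sum_congr rfl (fun qq _ => ?_)
    obtain ⟨i, j⟩ := qq
    exact hsym j i
  rw [hdiag, hgt]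
  ring

theorem stmt_18 (n ℓ : ℕ) (hn : 0 < n) (hℓ : 0 < ℓ)
    (p : Fin n → ℝ) (a : Fin n → ℕ) (ha : ∀ i, 0 < a i) (hmono : StrictMono a)
    (S : ℝ)
    (hS : S = ∑ q ∈ Finset.univ.filter (fun q : Fin n × Fin n => q.1 < q.2),
        ((Nat.gcd (a q.1) (a q.2) : ℝ) / (a q.2 : ℝ))) :
    ((n : ℝ) * ℓ) ^ 2 / ((n : ℝ) * ℓ + (n : ℝ) ^ 2 + 2 * ℓ * S) ≤
      ((Finset.univ.biUnion fun i => AP (p i) ((a i : ℝ)) ℓ).card : ℝ) := by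
  classical
  set A : Fin n → Finset ℝ := fun i => AP (p i) ((a i : ℝ)) ℓ with hAdef
  set U : Finset ℝ := Finset.univ.biUnion A with hU
  have hAsub : ∀ i, A i ⊆ U := fun i => Finset.subset_biUnion_of_mem A (Finset.mem_univ i)
  have hAcard : ∀ i, (A i).card = ℓ := fun i =>
    AP_card _ _ (by exact_mod_cast (ha i).ne') ℓ
  set f : ℝ → ℕ := fun z => (Finset.univ.filter (fun i => z ∈ A i)).card with hf
  have hfilter : ∀ i, U.filter (fun z => z ∈ A i) = A i := by
    intro i
    rw [Finset.filter_mem_eq_inter]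
    exact Finset.inter_eq_right.mpr (hAsub i)
  -- sum 1
  have hsum1 : ∑ z ∈ U, (f z : ℕ) = n * ℓ := by
    have : ∑ z ∈ U, f z = ∑ z ∈ U, ∑ i : Fin n, if z ∈ A i then 1 else 0 := by
      refine Finset.sum_congr rfl (fun z _ => ?_)
      exact Finset.card_filter _ _
    rw [this, Finset.sum_comm]
    have : ∀ i : Fin n, ∑ z ∈ U, (if z ∈ A i then 1 else 0) = ℓ := by
      intro i
      rw [← Finset.card_filter, hfilter, hAcard]
    rw [Finset.sum_congr rfl (fun i _ => this i), Finset.sum_const, Finset.card_univ,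
      Fintype.card_fin, smul_eq_mul]
  -- sum 2
  have key : ∀ z : ℝ, f z * f z =
      (Finset.univ.filter (fun qq : Fin n × Fin n => z ∈ A qq.1 ∧ z ∈ A qq.2)).card := by
    intro z
    rw [hf]
    rw [← Finset.card_product]
    congr 1
    rw [← Finset.filter_product, Finset.univ_product_univ]
  have hsum2 : ∑ z ∈ U, f z * f z =
      ∑ qq : Fin n × Fin n, (A qq.1 ∩ A qq.2).card := by
    have step1 : ∑ z ∈ U, f z * f z =
        ∑ z ∈ U, ∑ qq : Fin n × Fin n, (if z ∈ A qq.1 ∧ z ∈ A qq.2 then 1 else 0) := by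
      refine Finset.sum_congr rfl (fun z _ => ?_)
      rw [key z, Finset.card_filter]
    rw [step1, Finset.sum_comm]
    refine Finset.sum_congr rfl (fun qq _ => ?_)
    rw [← Finset.card_filter]
    have : U.filter (fun z => z ∈ A qq.1 ∧ z ∈ A qq.2) = A qq.1 ∩ A qq.2 := by
      ext w
      simp only [Finset.mem_filter, Finset.mem_inter]
      exact ⟨fun h => h.2, fun h => ⟨hAsub qq.1 h.1, h⟩⟩
    rw [this]
  -- Cauchy--Schwarz
  have hCS : ((n : ℝ) * ℓ) ^ 2 ≤ (U.card : ℝ) * ∑ z ∈ U, ((f z : ℝ)) ^ 2 := by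
    have h := sq_sum_le_card_mul_sum_sq (s := U) (f := fun z => ((f z : ℕ) : ℝ))
    have hcast : ∑ z ∈ U, ((f z : ℕ) : ℝ) = (n : ℝ) * ℓ := by
      rw [← Nat.cast_sum]
      exact_mod_cast congrArg (Nat.cast : ℕ → ℝ) hsum1
    rwa [hcast] at h
  -- bound on sum of squares
  have hsq_eq : ∑ z ∈ U, ((f z : ℝ)) ^ 2 =
      ∑ qq : Fin n × Fin n, ((A qq.1 ∩ A qq.2).card : ℝ) := by
    have h1 : ∑ z ∈ U, ((f z : ℝ)) ^ 2 = ∑ z ∈ U, ((f z * f z : ℕ) : ℝ) := by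
      refine Finset.sum_congr rfl (fun z _ => ?_); push_cast; ring
    rw [h1, ← Nat.cast_sum, hsum2, Nat.cast_sum]
  set P : Finset (Fin n × Fin n) :=
    Finset.univ.filter (fun qq : Fin n × Fin n => qq.1 < qq.2) with hP
  -- pair count
  have hpairs : ((n : ℝ)) ^ 2 = (n : ℝ) + 2 * (P.card : ℝ) := by
    have h := split_sum (n := n) (fun _ => (1 : ℝ)) (fun _ _ => rfl)
    simp only [Finset.sum_const, Finset.card_univ, Fintype.card_prod, Fintype.card_fin,
      nsmul_eq_mul, mul_one] at h
    push_cast at h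
    rw [sq]; linarith
  -- splitting the double sum
  have hsplit := split_sum (n := n) (fun qq => ((A qq.1 ∩ A qq.2).card : ℝ))
    (fun i j => by simp [Finset.inter_comm])
  have hdiag : ∑ i : Fin n, ((A i ∩ A i).card : ℝ) = (n : ℝ) * ℓ := by
    have : ∀ i : Fin n, ((A i ∩ A i).card : ℝ) = (ℓ : ℝ) := by
      intro i; rw [Finset.inter_self, hAcard]
    rw [Finset.sum_congr rfl (fun i _ => this i), Finset.sum_const, Finset.card_univ,
      Fintype.card_fin, nsmul_eq_mul]
  have hoff : ∑ qq ∈ P, ((A qq.1 ∩ A qq.2).card : ℝ) ≤ (ℓ : ℝ) * S + (P.card : ℝ) := by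
    have h1 : ∑ qq ∈ P, ((A qq.1 ∩ A qq.2).card : ℝ) ≤
        ∑ qq ∈ P, ((ℓ : ℝ) * (Nat.gcd (a qq.1) (a qq.2) : ℝ) / (a qq.2 : ℝ) + 1) := by
      refine Finset.sum_le_sum (fun qq _ => ?_)
      exact inter_card_le (p qq.1) (p qq.2) (a qq.1) (a qq.2) (ha _) (ha _) ℓ
    have h2 : ∑ qq ∈ P, ((ℓ : ℝ) * (Nat.gcd (a qq.1) (a qq.2) : ℝ) / (a qq.2 : ℝ) + 1)
        = (ℓ : ℝ) * S + (P.card : ℝ) := by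
      rw [Finset.sum_add_distrib, Finset.sum_const, nsmul_eq_mul, mul_one, hS,
        Finset.mul_sum]
      congr 1
      exact Finset.sum_congr rfl (fun qq _ => by rw [mul_div_assoc])
    linarith
  have hS0 : 0 ≤ S := by
    rw [hS]
    refine Finset.sum_nonneg (fun qq _ => div_nonneg (Nat.cast_nonneg _) (Nat.cast_nonneg _))
  have hfinal : ∑ z ∈ U, ((f z : ℝ)) ^ 2 ≤ (n : ℝ) * ℓ + (n : ℝ) ^ 2 + 2 * ℓ * S := by
    rw [hsq_eq, hsplit, hdiag]
    have hn0 : (0 : ℝ) ≤ n := Nat.cast_nonneg n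
    linarith
  have hD : 0 < (n : ℝ) * ℓ + (n : ℝ) ^ 2 + 2 * ℓ * S := by
    have h1 : (1 : ℝ) ≤ (n : ℝ) := by exact_mod_cast hn
    have h2 : (1 : ℝ) ≤ (ℓ : ℝ) := by exact_mod_cast hℓ
    nlinarith
  rw [div_le_iff₀ hD]
  calc ((n : ℝ) * ℓ) ^ 2 ≤ (U.card : ℝ) * ∑ z ∈ U, ((f z : ℝ)) ^ 2 := hCS
    _ ≤ (U.card : ℝ) * ((n : ℝ) * ℓ + (n : ℝ) ^ 2 + 2 * ℓ * S) :=
        mul_le_mul_of_nonneg_left hfinal (Nat.cast_nonneg _)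
end

section
/- For every positive integer n, the minimum possible cardinality of the union of n arithmetic progressions of real numbers, each of length 2, with pairwise distinct positive differences, equals ⌈1/2 + √(2n + 1/4)⌉. That is: (i) for any reals a₁, …, aₙ and pairwise distinct positive reals b₁, …, bₙ, the set ⋃ᵢ {aᵢ, aᵢ + bᵢ} has at least ⌈1/2 + √(2n + 1/4)⌉ elements; and (ii) there exist such aᵢ and pairwise distinct positive bᵢ for which ⋃ᵢ {aᵢ, aᵢ + bᵢ} has exactly ⌈1/2 + √(2n + 1/4)⌉ elements. -/
private lemma key_nat {i j i' j' : ℕ} (h : j < i) (h' : j' < i')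
    (heq : 2 ^ i + 2 ^ j' = 2 ^ i' + 2 ^ j) : i = i' ∧ j = j' := by
  have hi : i = i' := by
    by_contra hne
    rcases Nat.lt_or_ge i i' with hlt | hge
    · have h1 : 2 ^ i ≤ 2 ^ (i' - 1) := Nat.pow_le_pow_right (by norm_num) (by omega)
      have h2 : 2 ^ j' ≤ 2 ^ (i' - 1) := Nat.pow_le_pow_right (by norm_num) (by omega)
      have h3 : 2 ^ (i' - 1) * 2 = 2 ^ i' := by
        rw [← pow_succ]; congr 1; omega
      have h4 : 0 < 2 ^ j := Nat.pow_pos (by norm_num)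
      omega
    · have hgt : i' < i := by omega
      have h1 : 2 ^ i' ≤ 2 ^ (i - 1) := Nat.pow_le_pow_right (by norm_num) (by omega)
      have h2 : 2 ^ j ≤ 2 ^ (i - 1) := Nat.pow_le_pow_right (by norm_num) (by omega)
      have h3 : 2 ^ (i - 1) * 2 = 2 ^ i := by
        rw [← pow_succ]; congr 1; omega
      have h4 : 0 < 2 ^ j' := Nat.pow_pos (by norm_num)
      omega
  subst hi
  have hj : 2 ^ j' = 2 ^ j := by omega
  exact ⟨rfl, (Nat.pow_right_injective le_rfl hj).symm⟩

private lemma lower_bound (n : ℕ) (hn : 0 < n) (a b : Fin n → ℝ) (hb : ∀ i, 0 < b i)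
    (hbinj : Function.Injective b) :
    ⌈(1 : ℝ) / 2 + Real.sqrt (2 * n + 1 / 4)⌉ ≤
      (((Finset.univ.biUnion fun i => ({a i, a i + b i} : Finset ℝ)).card : ℤ)) := by
  set U := (Finset.univ.biUnion fun i => ({a i, a i + b i} : Finset ℝ)) with hU
  set k := U.card with hk
  -- the map i ↦ {a i, a i + b i} is injective
  have hfinj : Function.Injective (fun i => ({a i, a i + b i} : Finset ℝ)) := by
    intro i j hij
    simp only at hij
    have h1 : a i ∈ ({a j, a j + b j} : Finset ℝ) := by
      rw [← hij]; simp
    have h2 : a i + b i ∈ ({a j, a j + b j} : Finset ℝ) := by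
      rw [← hij]; simp
    simp only [Finset.mem_insert, Finset.mem_singleton] at h1 h2
    have hbi := hb i
    have hbj := hb j
    rcases h1 with h1 | h1 <;> rcases h2 with h2 | h2
    · exfalso; linarith
    · exact hbinj (by linarith)
    · exfalso; linarith
    · exfalso; linarith
  have hsub : Finset.univ.image (fun i => ({a i, a i + b i} : Finset ℝ)) ⊆
      U.powersetCard 2 := by
    intro s hs
    simp only [Finset.mem_image] at hs
    obtain ⟨i, _, rfl⟩ := hs
    rw [Finset.mem_powersetCard]
    constructor
    · intro x hx
      exact Finset.mem_biUnion.2 ⟨i, Finset.mem_univ i, hx⟩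
    · exact Finset.card_pair (by have := hb i; intro h; linarith)
  have hcard : n ≤ k.choose 2 := by
    calc n = (Finset.univ.image (fun i => ({a i, a i + b i} : Finset ℝ))).card := by
            rw [Finset.card_image_of_injective _ hfinj, Finset.card_univ, Fintype.card_fin]
      _ ≤ (U.powersetCard 2).card := Finset.card_le_card hsub
      _ = k.choose 2 := by rw [Finset.card_powersetCard]
  have h2n : 2 * n ≤ k * (k - 1) := by
    rw [Nat.choose_two_right] at hcard
    have := Nat.div_mul_le_self (k * (k - 1)) 2
    omega
  have hk1 : 1 ≤ k := by
    rw [hk]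
    exact Finset.card_pos.2
      ⟨a ⟨0, hn⟩, Finset.mem_biUnion.2 ⟨⟨0, hn⟩, Finset.mem_univ _, by simp⟩⟩
  rw [Int.ceil_le]
  push_cast
  have h2nr : (2 : ℝ) * n ≤ (k : ℝ) * ((k : ℝ) - 1) := by
    have : ((2 * n : ℕ) : ℝ) ≤ ((k * (k - 1) : ℕ) : ℝ) := by exact_mod_cast h2n
    push_cast [Nat.cast_sub hk1] at this
    linarith
  have hs : Real.sqrt (2 * n + 1 / 4) ≤ (k : ℝ) - 1 / 2 := by
    have hnn : (0 : ℝ) ≤ (k : ℝ) - 1 / 2 := by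
      have : (1 : ℝ) ≤ (k : ℝ) := by exact_mod_cast hk1
      linarith
    rw [show ((k : ℝ) - 1 / 2) = Real.sqrt (((k : ℝ) - 1 / 2) ^ 2) from
      (Real.sqrt_sq hnn).symm]
    apply Real.sqrt_le_sqrt
    nlinarith
  linarith

theorem stmt_19 (n : ℕ) (hn : 0 < n) :
    (∀ a b : Fin n → ℝ, (∀ i, 0 < b i) → Function.Injective b →
        ⌈(1 : ℝ) / 2 + Real.sqrt (2 * n + 1 / 4)⌉ ≤
          (((Finset.univ.biUnion fun i => ({a i, a i + b i} : Finset ℝ)).card : ℤ))) ∧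
    (∃ a b : Fin n → ℝ, (∀ i, 0 < b i) ∧ Function.Injective b ∧
        (((Finset.univ.biUnion fun i => ({a i, a i + b i} : Finset ℝ)).card : ℤ)) =
          ⌈(1 : ℝ) / 2 + Real.sqrt (2 * n + 1 / 4)⌉) := by
  refine ⟨fun a b hb hbinj => lower_bound n hn a b hb hbinj, ?_⟩
  set c : ℝ := (1 : ℝ) / 2 + Real.sqrt (2 * n + 1 / 4) with hc
  set K : ℤ := ⌈c⌉ with hK
  set k : ℕ := K.toNat with hk0
  have hsqnn : (0 : ℝ) ≤ Real.sqrt (2 * n + 1 / 4) := Real.sqrt_nonneg _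
  have hc1 : (1 : ℝ) ≤ c := by
    have hsq := Real.sq_sqrt (show (0 : ℝ) ≤ 2 * n + 1 / 4 by positivity)
    have hn' : (0 : ℝ) ≤ n := Nat.cast_nonneg n
    have h12 : (1 / 2 : ℝ) ≤ Real.sqrt (2 * n + 1 / 4) := by nlinarith [hsqnn]
    rw [hc]; linarith
  have hK1 : 1 ≤ K := by
    have h0 : 0 < ⌈c⌉ := Int.ceil_pos.mpr (by linarith)
    rw [hK]; omega
  have hkK : (k : ℤ) = K := Int.toNat_of_nonneg (by omega)
  have hk1 : 1 ≤ k := by omega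
  have hck : c ≤ (k : ℝ) := by
    have := Int.le_ceil c
    rw [← hK, ← hkK] at this
    exact_mod_cast this
  have h2n : 2 * n ≤ k * (k - 1) := by
    have hs : Real.sqrt (2 * n + 1 / 4) ≤ (k : ℝ) - 1 / 2 := by
      rw [hc] at hck; linarith
    have hsq : (2 : ℝ) * n + 1 / 4 ≤ ((k : ℝ) - 1 / 2) ^ 2 := by
      have := Real.sq_sqrt (by positivity : (0 : ℝ) ≤ 2 * (n : ℝ) + 1 / 4)
      nlinarith
    have : ((2 * n : ℕ) : ℝ) ≤ ((k * (k - 1) : ℕ) : ℝ) := by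
      push_cast [Nat.cast_sub hk1]
      nlinarith
    exact_mod_cast this
  -- embedding from Fin n into pairs
  have hcardT : n ≤ Fintype.card (Σ i : Fin k, Fin (i : ℕ)) := by
    have : Fintype.card (Σ i : Fin k, Fin (i : ℕ)) * 2 = k * (k - 1) := by
      rw [Fintype.card_sigma]
      simp only [Fintype.card_fin]
      rw [show (∑ x : Fin k, (x : ℕ)) = ∑ i ∈ Finset.range k, i from
        Fin.sum_univ_eq_sum_range (fun i => i) k]
      exact Finset.sum_range_id_mul_two k
    omega
  obtain ⟨e⟩ : Nonempty (Fin n ↪ (Σ i : Fin k, Fin (i : ℕ))) :=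
    Function.Embedding.nonempty_of_card_le (by simpa using hcardT)
  set ii : Fin n → ℕ := fun m => ((e m).1 : ℕ) with hii
  set jj : Fin n → ℕ := fun m => ((e m).2 : ℕ) with hjj
  have hji : ∀ m, jj m < ii m := fun m => (e m).2.isLt
  have hik : ∀ m, ii m < k := fun m => (e m).1.isLt
  refine ⟨fun m => (2 : ℝ) ^ (jj m), fun m => (2 : ℝ) ^ (ii m) - 2 ^ (jj m), ?_, ?_, ?_⟩
  · intro m
    show (0 : ℝ) < (2 : ℝ) ^ (ii m) - 2 ^ (jj m)
    have := pow_lt_pow_right₀ (by norm_num : (1 : ℝ) < 2) (hji m)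
    linarith
  · intro m m' hmm
    have hmm : (2 : ℝ) ^ (ii m) - 2 ^ (jj m) = (2 : ℝ) ^ (ii m') - 2 ^ (jj m') := hmm
    have hnat : 2 ^ (ii m) + 2 ^ (jj m') = 2 ^ (ii m') + 2 ^ (jj m) := by
      have : ((2 ^ (ii m) + 2 ^ (jj m') : ℕ) : ℝ) = ((2 ^ (ii m') + 2 ^ (jj m) : ℕ) : ℝ) := by
        push_cast; linarith
      exact_mod_cast this
    obtain ⟨hieq, hjeq⟩ := key_nat (hji m) (hji m') hnat
    apply e.injective
    have h1 : (e m).1 = (e m').1 := Fin.ext hieq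
    exact Sigma.ext h1 ((Fin.heq_ext_iff (by rw [h1])).2 hjeq)
  · set U := (Finset.univ.biUnion fun m =>
      ({(2 : ℝ) ^ (jj m), (2 : ℝ) ^ (jj m) + ((2 : ℝ) ^ (ii m) - 2 ^ (jj m))} : Finset ℝ)) with hUdef
    have hsubS : U ⊆ (Finset.range k).image (fun i => (2 : ℝ) ^ i) := by
      intro x hx
      rw [Finset.mem_biUnion] at hx
      obtain ⟨m, _, hm⟩ := hx
      simp only [Finset.mem_insert, Finset.mem_singleton] at hm
      rw [Finset.mem_image]
      rcases hm with hm | hm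
      · exact ⟨jj m, Finset.mem_range.2 (lt_trans (hji m) (hik m)), hm.symm⟩
      · exact ⟨ii m, Finset.mem_range.2 (hik m), by rw [hm]; ring⟩
    have hUle : U.card ≤ k := by
      calc U.card ≤ ((Finset.range k).image (fun i => (2 : ℝ) ^ i)).card :=
            Finset.card_le_card hsubS
        _ ≤ k := le_trans Finset.card_image_le (by rw [Finset.card_range])
    have hUge : K ≤ (U.card : ℤ) := by
      apply lower_bound n hn
      · intro m
        show (0 : ℝ) < (2 : ℝ) ^ (ii m) - 2 ^ (jj m)
        have := pow_lt_pow_right₀ (by norm_num : (1 : ℝ) < 2) (hji m)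
        linarith
      · intro m m' hmm
        have hmm : (2 : ℝ) ^ (ii m) - 2 ^ (jj m) = (2 : ℝ) ^ (ii m') - 2 ^ (jj m') := hmm
        have hnat : 2 ^ (ii m) + 2 ^ (jj m') = 2 ^ (ii m') + 2 ^ (jj m) := by
          have : ((2 ^ (ii m) + 2 ^ (jj m') : ℕ) : ℝ) =
              ((2 ^ (ii m') + 2 ^ (jj m) : ℕ) : ℝ) := by
            push_cast; linarith
          exact_mod_cast this
        obtain ⟨hieq, hjeq⟩ := key_nat (hji m) (hji m') hnat
        apply e.injective
        have h1 : (e m).1 = (e m').1 := Fin.ext hieq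
        exact Sigma.ext h1 ((Fin.heq_ext_iff (by rw [h1])).2 hjeq)
    omega
end
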